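/- arXiv:1502.06571 — 10 statements merged into one kernel-verified Lean document; each statement's English description precedes it below -/
import Mathlib

section
/- Let (X,d) be a metric space, let a < b be real numbers, and let c : [a,b] → X be a continuous curve of finite length. Then there exists an increasing homeomorphism ψ : [a,b] → [a,b] (with ψ(a) = a and ψ(b) = b) such that both ψ and the composition c ∘ ψ are Lipschitz continuous. -/
/-!
Let `v t` be the length of `c` on `[a, t]`. The map `t ↦ t + v t` is continuous (since `c` is),
and its increments dominate both `|y - x|` and `d(c x, c y)`. Rescaled affinely to fix `a` and
`b`, it becomes an increasing self-homeomorphism `τ` of `[a, b]`, and its inverse `ψ` does the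
job: `ψ` and `c ∘ ψ` are Lipschitz because `τ` expands both distances up to a constant.
-/

open Set

namespace variationOnFromTo

variable {α : Type*} [LinearOrder α] {E : Type*} [PseudoMetricSpace E] {f : α → E} {s : Set α}

theorem dist_le_sub (hf : LocallyBoundedVariationOn f s) {a x y : α} (ha : a ∈ s) (hx : x ∈ s)
    (hy : y ∈ s) (hxy : x ≤ y) :
    dist (f x) (f y) ≤ variationOnFromTo f s a y - variationOnFromTo f s a x := by
  rw [variationOnFromTo.sub_right hf ha hy hx, variationOnFromTo.eq_of_le f s hxy, dist_edist]
  exact ENNReal.toReal_mono (hf x y hx hy)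
    (eVariationOn.edist_le f ⟨hx, le_rfl, hxy⟩ ⟨hy, hxy, le_rfl⟩)

protected theorem continuousOn [TopologicalSpace α] [OrderTopology α]
    (hf : LocallyBoundedVariationOn f s) (hfc : ContinuousOn f s) {a : α} (ha : a ∈ s) :
    ContinuousOn (variationOnFromTo f s a) s := by
  intro x hx
  have hleft : ContinuousWithinAt (variationOnFromTo f s a) (s ∩ Iio x) x := by
    simpa only [ContinuousWithinAt, dist_self, sub_zero] using
      tendsto_left ha hx hf ((hfc x hx).mono inter_subset_left)
  have hright : ContinuousWithinAt (variationOnFromTo f s a) (s ∩ Ioi x) x := by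
    simpa only [ContinuousWithinAt, dist_self, add_zero] using
      tendsto_right ha hx hf ((hfc x hx).mono inter_subset_left)
  refine (hleft.union hright).insert.mono fun y hy ↦ ?_
  rcases lt_trichotomy y x with h | rfl | h
  · exact .inr (.inl ⟨hy, h⟩)
  · exact .inl rfl
  · exact .inr (.inr ⟨hy, h⟩)

theorem dist_add_dist_le {f : ℝ → E} {s : Set ℝ} (hf : LocallyBoundedVariationOn f s)
    {a x y : ℝ} (ha : a ∈ s) (hx : x ∈ s) (hy : y ∈ s) :
    dist x y + dist (f x) (f y) ≤
      dist (x + variationOnFromTo f s a x) (y + variationOnFromTo f s a y) := by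
  wlog hxy : x ≤ y generalizing x y
  · simpa only [dist_comm] using this hy hx (le_of_not_ge hxy)
  have hvar := dist_le_sub hf ha hx hy hxy
  rw [Real.dist_eq x, abs_of_nonpos (by linarith), Real.dist_eq]
  linarith [neg_abs_le (x + variationOnFromTo f s a x - (y + variationOnFromTo f s a y))]

end variationOnFromTo

theorem ContinuousOn.bijOn_Icc_of_strictMonoOn {α δ : Type*} [ConditionallyCompleteLinearOrder α]
    [DenselyOrdered α] [TopologicalSpace α] [OrderTopology α] [LinearOrder δ] [TopologicalSpace δ]
    [OrderClosedTopology δ] {f : α → δ} {a b : α} (hab : a ≤ b) (hf : ContinuousOn f (Icc a b))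
    (hm : StrictMonoOn f (Icc a b)) : BijOn f (Icc a b) (Icc (f a) (f b)) :=
  ⟨hm.monotoneOn.mapsTo_Icc, hm.injOn, hf.surjOn_Icc (left_mem_Icc.2 hab) (right_mem_Icc.2 hab)⟩

theorem StrictMonoOn.strictMonoOn_of_rightInvOn {α β : Type*} [LinearOrder α] [Preorder β]
    {f : α → β} {g : β → α} {s : Set α} {t : Set β} (hf : StrictMonoOn f s) (hg : MapsTo g t s)
    (hfg : RightInvOn g f t) : StrictMonoOn g t := fun x hx y hy hxy ↦
  (hf.lt_iff_lt (hg hx) (hg hy)).1 (by rwa [hfg hx, hfg hy])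

theorem lipschitzOnWith_comp_of_rightInvOn {α β γ : Type*} [PseudoMetricSpace α]
    [PseudoMetricSpace β] [PseudoMetricSpace γ] {f : α → γ} {τ : α → β} {ψ : β → α}
    {s : Set α} {t : Set β} {K : NNReal}
    (hf : ∀ x ∈ s, ∀ y ∈ s, dist (f x) (f y) ≤ K * dist (τ x) (τ y)) (hψ : MapsTo ψ t s)
    (hτψ : RightInvOn ψ τ t) : LipschitzOnWith K (f ∘ ψ) t :=
  LipschitzOnWith.of_dist_le_mul fun x hx y hy ↦ by
    simpa only [Function.comp_apply, hτψ hx, hτψ hy] using hf _ (hψ hx) _ (hψ hy)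

theorem BoundedVariationOn.exists_strictMonoOn_Icc_dist_add_dist_le {X : Type*}
    [PseudoMetricSpace X] {a b : ℝ} (hab : a < b) {c : ℝ → X}
    (hc : ContinuousOn c (Icc a b)) (hfin : BoundedVariationOn c (Icc a b)) :
    ∃ τ : ℝ → ℝ, ∃ K : NNReal, ContinuousOn τ (Icc a b) ∧ StrictMonoOn τ (Icc a b) ∧
      τ a = a ∧ τ b = b ∧
      ∀ x ∈ Icc a b, ∀ y ∈ Icc a b, dist x y + dist (c x) (c y) ≤ K * dist (τ x) (τ y) := by
  have hloc := hfin.locallyBoundedVariationOn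
  have ha : a ∈ Icc a b := left_mem_Icc.2 hab.le
  set v := variationOnFromTo c (Icc a b) a
  have hL : 0 < b + v b - a := by linarith [variationOnFromTo.nonneg_of_le c (Icc a b) hab.le]
  set r := (b + v b - a) / (b - a)
  have hr : 0 < r := div_pos hL (sub_pos.2 hab)
  refine ⟨fun t ↦ a + (t + v t - a) / r, ⟨r, hr.le⟩, ?_, ?_, ?_, ?_, ?_⟩
  · exact continuousOn_const.add <| ((continuousOn_id.add
      (variationOnFromTo.continuousOn hloc hc ha)).sub continuousOn_const).div_const r
  · intro x hx y hy hxy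
    have hv : v x ≤ v y := variationOnFromTo.monotoneOn hloc ha hx hy hxy.le
    have : x + v x - a < y + v y - a := by linarith
    dsimp only
    gcongr
  · simp [v, variationOnFromTo.self]
  · dsimp only
    rw [div_div_eq_mul_div, mul_div_cancel_left₀ _ hL.ne']
    ring
  · intro x hx y hy
    calc dist x y + dist (c x) (c y) ≤ dist (x + v x) (y + v y) :=
          variationOnFromTo.dist_add_dist_le hloc ha hx hy
      _ = r * dist (a + (x + v x - a) / r) (a + (y + v y - a) / r) := by
          simp only [Real.dist_eq]
          rw [← abs_of_pos hr, ← abs_mul, abs_of_pos hr]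
          congr 1
          field_simp
          ring

/-- **Reparametrization of rectifiable curves.** Let `(X,d)` be a metric space, `a < b`
real numbers, and `c : [a,b] → X` a continuous curve of finite length (the length being
the total variation of `c` on `[a,b]`). Then there exists an increasing homeomorphism
`ψ : [a,b] → [a,b]` fixing the endpoints such that both `ψ` and `c ∘ ψ` are Lipschitz. -/
theorem reparametrization_of_rectifiable_curve
    {X : Type*} [MetricSpace X] (a b : ℝ) (hab : a < b)
    (c : ℝ → X) (hc : ContinuousOn c (Set.Icc a b))
    (hfin : eVariationOn c (Set.Icc a b) ≠ ⊤) :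
    ∃ ψ : ℝ → ℝ,
      Set.MapsTo ψ (Set.Icc a b) (Set.Icc a b) ∧
      StrictMonoOn ψ (Set.Icc a b) ∧
      Set.SurjOn ψ (Set.Icc a b) (Set.Icc a b) ∧
      ψ a = a ∧ ψ b = b ∧
      (∃ K₁ : NNReal, LipschitzOnWith K₁ ψ (Set.Icc a b)) ∧
      (∃ K₂ : NNReal, LipschitzOnWith K₂ (c ∘ ψ) (Set.Icc a b)) := by
  obtain ⟨τ, K, hτc, hτm, hτa, hτb, hdist⟩ :=
    BoundedVariationOn.exists_strictMonoOn_Icc_dist_add_dist_le hab hc hfin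
  have hτ : BijOn τ (Icc a b) (Icc a b) := by
    simpa only [hτa, hτb] using hτc.bijOn_Icc_of_strictMonoOn hab.le hτm
  set ψ := Function.invFunOn τ (Icc a b)
  have hinv : InvOn ψ τ (Icc a b) (Icc a b) := hτ.invOn_invFunOn
  have hψ : BijOn ψ (Icc a b) (Icc a b) := hτ.symm hinv.symm
  refine ⟨ψ, hψ.mapsTo, hτm.strictMonoOn_of_rightInvOn hψ.mapsTo hinv.2, hψ.surjOn, ?_, ?_,
    ⟨K, lipschitzOnWith_comp_of_rightInvOn (f := id) ?_ hψ.mapsTo hinv.2⟩,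
    ⟨K, lipschitzOnWith_comp_of_rightInvOn ?_ hψ.mapsTo hinv.2⟩⟩
  · simpa only [hτa] using hinv.1 (left_mem_Icc.2 hab.le)
  · simpa only [hτb] using hinv.1 (right_mem_Icc.2 hab.le)
  · exact fun x hx y hy ↦ le_of_add_le_of_nonneg_left (hdist x hx y hy) dist_nonneg
  · exact fun x hx y hy ↦ le_of_add_le_of_nonneg_right (hdist x hx y hy) dist_nonneg
end

section
/- Let n ≥ 1, let s be a seminorm on ℝⁿ, let Q ≥ 1, and let T : ℝⁿ → ℝⁿ be a bijective linear map such that the norm v ↦ |T(v)| (Euclidean norm of T(v)) is Q-quasi-conformal. Then Q^{−(n−1)}·𝓘ⁿ_+(s) ≤ |det T|^{−1}·𝓘ⁿ_+(s ∘ T) ≤ Q^{n−1}·𝓘ⁿ_+(s). -/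
/-!
Let `m ≤ M` be the minimum and the maximum of `‖T v‖` on the unit sphere, so that `M ≤ Q m`.
Homogeneity of `s` gives `mⁿ 𝓘ⁿ₊(s) ≤ 𝓘ⁿ₊(s ∘ T) ≤ Mⁿ 𝓘ⁿ₊(s)`. Hadamard's inequality for `T`, in an
orthonormal basis whose first vector is a minimiser of `‖T v‖`, gives `|det T| ≤ m Mⁿ⁻¹`; for
`T⁻¹`, in a basis whose first vector is `T w / ‖T w‖` with `w` a maximiser, it gives
`M mⁿ⁻¹ ≤ |det T|`. Hence `𝓘ⁿ₊(s ∘ T) / |det T|` lies between `(m / M)ⁿ⁻¹ 𝓘ⁿ₊(s)` and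
`(M / m)ⁿ⁻¹ 𝓘ⁿ₊(s)`.
-/

open MeasureTheory Metric

/-- `𝓘^p_+(s) = max{s(v)^p : v ∈ S^{n-1}}`, realized as the supremum over the unit sphere. -/
noncomputable def Iplus (n : ℕ) (p : ℝ) (s : Seminorm ℝ (EuclideanSpace ℝ (Fin n))) : ℝ :=
  ⨆ v : sphere (0 : EuclideanSpace ℝ (Fin n)) 1, (s v.1) ^ p

open Module

theorem LinearEquiv.norm_symm_apply_le {R E F : Type*} [Semiring R] [AddCommMonoid E]
    [AddCommMonoid F] [Module R E] [Module R F] [Norm E] [Norm F] (A : E ≃ₗ[R] F) {m : ℝ}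
    (hm0 : 0 < m) (hm : ∀ x, m * ‖x‖ ≤ ‖A x‖) (y : F) : ‖A.symm y‖ ≤ m⁻¹ * ‖y‖ := by
  simpa [le_inv_mul_iff₀ hm0] using hm (A.symm y)

theorem LinearEquiv.norm_apply_pos {R E F : Type*} [Semiring R] [NormedAddCommGroup E]
    [NormedAddCommGroup F] [Module R E] [Module R F] (A : E ≃ₗ[R] F) {x : E} (hx : x ≠ 0) :
    0 < ‖A x‖ :=
  norm_pos_iff.2 (A.map_ne_zero_iff.2 hx)

section Hadamard

variable {E : Type*} [NormedAddCommGroup E] [InnerProductSpace ℝ E]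

theorem abs_det_le_prod_norm_apply {n : ℕ} [Fact (finrank ℝ E = n)] (A : E →ₗ[ℝ] E)
    (b : OrthonormalBasis (Fin n) ℝ E) : |LinearMap.det A| ≤ ∏ i, ‖A (b i)‖ := by
  let o : Orientation ℝ E (Fin n) := b.toBasis.orientation
  calc |LinearMap.det A| = |b.toBasis.det (A ∘ b)| := by
        rw [← b.coe_toBasis, Basis.det_comp, Basis.det_self, mul_one]
    _ = |o.volumeForm (A ∘ b)| := (o.volumeForm_robust' b _).symm
    _ ≤ ∏ i, ‖A (b i)‖ := o.abs_volumeForm_apply_le _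

theorem exists_orthonormalBasis_apply_zero_eq {k : ℕ} [Fact (finrank ℝ E = k + 1)] {v : E}
    (hv : ‖v‖ = 1) : ∃ b : OrthonormalBasis (Fin (k + 1)) ℝ E, b 0 = v := by
  have : FiniteDimensional ℝ E := .of_fact_finrank_eq_succ k
  have horth : Orthonormal ℝ (({0} : Set (Fin (k + 1))).domRestrict fun _ => v) :=
    ⟨fun _ => hv, fun i j hij => (hij (Subtype.ext (i.2.trans j.2.symm))).elim⟩
  obtain ⟨b, hb⟩ := horth.exists_orthonormalBasis_extension_of_card_eq (by simpa using Fact.out)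
  exact ⟨b, hb 0 rfl⟩

theorem abs_det_le_norm_apply_mul_pow [FiniteDimensional ℝ E] (A : E →ₗ[ℝ] E) {M : ℝ}
    (hM : ∀ x, ‖A x‖ ≤ M * ‖x‖) {v : E} (hv : ‖v‖ = 1) :
    |LinearMap.det A| ≤ ‖A v‖ * M ^ (finrank ℝ E - 1) := by
  have : Nontrivial E := nontrivial_of_ne v 0 (ne_zero_of_norm_ne_zero (by simp [hv]))
  obtain ⟨k, hk⟩ := Nat.exists_eq_add_of_le' (finrank_pos (R := ℝ) (M := E))
  have : Fact (finrank ℝ E = k + 1) := ⟨hk⟩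
  obtain ⟨b, rfl⟩ := exists_orthonormalBasis_apply_zero_eq (k := k) hv
  have hM' : ∀ i, ‖A (b i)‖ ≤ M := fun i => by simpa [b.orthonormal.1 i] using hM (b i)
  calc |LinearMap.det A| ≤ ∏ i, ‖A (b i)‖ := abs_det_le_prod_norm_apply A b
    _ = ‖A (b 0)‖ * ∏ i : Fin k, ‖A (b i.succ)‖ := Fin.prod_univ_succ _
    _ ≤ ‖A (b 0)‖ * M ^ (finrank ℝ E - 1) := by
      rw [hk, Nat.add_sub_cancel]
      gcongr
      exact (Finset.prod_le_prod (fun _ _ => norm_nonneg _) fun i _ => hM' i.succ).trans_eq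
        (by simp)

theorem norm_apply_mul_pow_le_abs_det [FiniteDimensional ℝ E] (A : E ≃ₗ[ℝ] E)
    {m : ℝ} (hm0 : 0 < m) (hm : ∀ x, m * ‖x‖ ≤ ‖A x‖) {v : E} (hv : ‖v‖ = 1) :
    ‖A v‖ * m ^ (finrank ℝ E - 1) ≤ |LinearMap.det (A : E →ₗ[ℝ] E)| := by
  have hAv : 0 < ‖A v‖ := hm0.trans_le (by simpa [hv] using hm v)
  have hdet_symm : |LinearMap.det (A.symm : E →ₗ[ℝ] E)| = |LinearMap.det (A : E →ₗ[ℝ] E)|⁻¹ :=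
    eq_inv_of_mul_eq_one_left (by rw [← abs_mul, A.det_symm_mul_det, abs_one])
  have key := abs_det_le_norm_apply_mul_pow (A.symm : E →ₗ[ℝ] E)
    (A.norm_symm_apply_le hm0 hm) (norm_smul_inv_norm (𝕜 := ℝ) (norm_pos_iff.1 hAv))
  simp only [LinearEquiv.coe_coe, map_smul, LinearEquiv.symm_apply_apply, norm_smul, norm_inv,
    RCLike.ofReal_real_eq_id, id_eq, norm_norm, hv, mul_one, hdet_symm, inv_pow, ← mul_inv] at key
  exact (inv_le_inv₀ (abs_pos.2 A.isUnit_det'.ne_zero) (by positivity)).1 key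

end Hadamard

theorem LinearMap.exists_sphere_norm_apply_bounds {E F : Type*} [NormedAddCommGroup E]
    [NormedSpace ℝ E] [FiniteDimensional ℝ E] [Nontrivial E] [SeminormedAddCommGroup F]
    [NormedSpace ℝ F] (f : E →ₗ[ℝ] F) :
    ∃ v w : E, ‖v‖ = 1 ∧ ‖w‖ = 1 ∧ ∀ x, ‖f v‖ * ‖x‖ ≤ ‖f x‖ ∧ ‖f x‖ ≤ ‖f w‖ * ‖x‖ := by
  have hS : (sphere (0 : E) 1).Nonempty := NormedSpace.sphere_nonempty.2 zero_le_one
  have hf : ContinuousOn (fun x => ‖f x‖) (sphere (0 : E) 1) :=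
    f.continuous_of_finiteDimensional.norm.continuousOn
  obtain ⟨v, hv, hmin⟩ := (isCompact_sphere (0 : E) 1).exists_isMinOn hS hf
  obtain ⟨w, hw, hmax⟩ := (isCompact_sphere (0 : E) 1).exists_isMaxOn hS hf
  rw [mem_sphere_zero_iff_norm] at hv hw
  refine ⟨v, w, hv, hw, fun x => ?_⟩
  rcases eq_or_ne x 0 with rfl | hx
  · simp
  have hu : ‖x‖⁻¹ • x ∈ sphere (0 : E) 1 := by
    simpa using norm_smul_inv_norm (𝕜 := ℝ) hx
  have hfx : ‖f x‖ = ‖f (‖x‖⁻¹ • x)‖ * ‖x‖ := by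
    rw [map_smul, norm_smul, norm_inv, norm_norm, mul_comm,
      mul_inv_cancel_left₀ (norm_ne_zero_iff.2 hx)]
  rw [hfx]
  exact ⟨by gcongr; exact hmin hu, by gcongr; exact hmax hu⟩

section Iplus

variable {n : ℕ} {p : ℝ} (s : Seminorm ℝ (EuclideanSpace ℝ (Fin n)))

theorem Iplus_nonneg : 0 ≤ Iplus n p s :=
  Real.iSup_nonneg fun _ => Real.rpow_nonneg (apply_nonneg _ _) _

theorem rpow_le_Iplus (hp : 0 ≤ p) {v : EuclideanSpace ℝ (Fin n)} (hv : ‖v‖ = 1) :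
    s v ^ p ≤ Iplus n p s := by
  have hs : Continuous fun v : sphere (0 : EuclideanSpace ℝ (Fin n)) 1 => s v.1 ^ p :=
    (s.convexOn.locallyLipschitz.continuous.comp continuous_subtype_val).rpow_const
      fun _ => Or.inr hp
  exact le_ciSup (isCompact_range hs).bddAbove ⟨v, mem_sphere_zero_iff_norm.2 hv⟩

theorem rpow_apply_le_rpow_norm_mul_Iplus (hp : 0 < p) (x : EuclideanSpace ℝ (Fin n)) :
    s x ^ p ≤ ‖x‖ ^ p * Iplus n p s := by
  rcases eq_or_ne x 0 with rfl | hx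
  · simp [Real.zero_rpow hp.ne']
  calc s x ^ p = (‖x‖ * s (‖x‖⁻¹ • x)) ^ p := by
        rw [map_smul_eq_mul, norm_inv, norm_norm, mul_inv_cancel_left₀ (norm_ne_zero_iff.2 hx)]
    _ = ‖x‖ ^ p * s (‖x‖⁻¹ • x) ^ p := Real.mul_rpow (norm_nonneg _) (apply_nonneg _ _)
    _ ≤ ‖x‖ ^ p * Iplus n p s := by
      gcongr
      exact rpow_le_Iplus s hp.le (norm_smul_inv_norm (𝕜 := ℝ) hx)

theorem Iplus_comp_le (T : EuclideanSpace ℝ (Fin n) →ₗ[ℝ] EuclideanSpace ℝ (Fin n)) {M : ℝ}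
    (hM0 : 0 ≤ M) (hM : ∀ x, ‖T x‖ ≤ M * ‖x‖) (hp : 0 < p) :
    Iplus n p (s.comp T) ≤ M ^ p * Iplus n p s := by
  refine Real.iSup_le (fun v => ?_) (mul_nonneg (Real.rpow_nonneg hM0 _) (Iplus_nonneg s))
  have hv : ‖v.1‖ = 1 := mem_sphere_zero_iff_norm.1 v.2
  calc s (T v) ^ p ≤ ‖T v‖ ^ p * Iplus n p s := rpow_apply_le_rpow_norm_mul_Iplus s hp _
    _ ≤ M ^ p * Iplus n p s := by
      have hI := Iplus_nonneg s (p := p)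
      gcongr
      simpa [hv] using hM v

theorem le_Iplus_comp (T : EuclideanSpace ℝ (Fin n) ≃ₗ[ℝ] EuclideanSpace ℝ (Fin n)) {m : ℝ}
    (hm0 : 0 < m) (hm : ∀ x, m * ‖x‖ ≤ ‖T x‖) (hp : 0 < p) :
    m ^ p * Iplus n p s ≤ Iplus n p (s.comp T.toLinearMap) := by
  have h := Iplus_comp_le (s.comp T.toLinearMap) T.symm.toLinearMap (inv_nonneg.2 hm0.le)
    (T.norm_symm_apply_le hm0 hm) hp
  rwa [← Seminorm.comp_comp, T.comp_symm, Seminorm.comp_id, Real.inv_rpow hm0.le,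
    le_inv_mul_iff₀ (Real.rpow_pos_of_pos hm0 p)] at h

theorem inv_abs_det_mul_Iplus_comp_mem_Icc
    (T : EuclideanSpace ℝ (Fin n) ≃ₗ[ℝ] EuclideanSpace ℝ (Fin n)) {v w : EuclideanSpace ℝ (Fin n)}
    (hv : ‖v‖ = 1) (hw : ‖w‖ = 1) (hmin : ∀ x, ‖T v‖ * ‖x‖ ≤ ‖T x‖)
    (hmax : ∀ x, ‖T x‖ ≤ ‖T w‖ * ‖x‖) :
    |LinearMap.det T.toLinearMap|⁻¹ * Iplus n n (s.comp T.toLinearMap) ∈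
      Set.Icc ((‖T v‖ / ‖T w‖) ^ (n - 1) * Iplus n n s)
        ((‖T w‖ / ‖T v‖) ^ (n - 1) * Iplus n n s) := by
  obtain ⟨k, rfl⟩ : ∃ k, n = k + 1 :=
    Nat.exists_eq_succ_of_ne_zero (by rintro rfl; simp [Subsingleton.elim v 0] at hv)
  have hm : 0 < ‖T v‖ := T.norm_apply_pos (by rintro rfl; simp at hv)
  have hM : 0 < ‖T w‖ := T.norm_apply_pos (by rintro rfl; simp at hw)
  have hdet_le := abs_det_le_norm_apply_mul_pow T.toLinearMap hmax hv
  have hdet_ge := norm_apply_mul_pow_le_abs_det T hm hmin hw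
  have hupper := Iplus_comp_le s T.toLinearMap (norm_nonneg _) hmax (p := (k + 1 : ℕ))
    (by positivity)
  have hlower := le_Iplus_comp s T hm hmin (p := (k + 1 : ℕ)) (by positivity)
  simp only [finrank_euclideanSpace_fin, Nat.add_sub_cancel, LinearEquiv.coe_coe]
    at hdet_le hdet_ge ⊢
  rw [Real.rpow_natCast] at hupper hlower
  set I := Iplus (k + 1) (k + 1 : ℕ) s
  set J := Iplus (k + 1) (k + 1 : ℕ) (s.comp T.toLinearMap)
  have hI : 0 ≤ I := Iplus_nonneg s
  have hJ : 0 ≤ J := Iplus_nonneg _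
  have hdet0 : 0 < |LinearMap.det T.toLinearMap| := abs_pos.2 T.isUnit_det'.ne_zero
  constructor
  · calc (‖T v‖ / ‖T w‖) ^ k * I = (‖T v‖ * ‖T w‖ ^ k)⁻¹ * (‖T v‖ ^ (k + 1) * I) := by
          rw [div_pow]; field_simp; ring
      _ ≤ |LinearMap.det T.toLinearMap|⁻¹ * J := by gcongr
  · calc |LinearMap.det T.toLinearMap|⁻¹ * J ≤ (‖T w‖ * ‖T v‖ ^ k)⁻¹ * (‖T w‖ ^ (k + 1) * I) := by
          gcongr
      _ = (‖T w‖ / ‖T v‖) ^ k * I := by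
        rw [div_pow]; field_simp; ring

end Iplus

theorem Iplus_comp_quasiconformal_general (n : ℕ) (hn : 1 ≤ n)
    (s : Seminorm ℝ (EuclideanSpace ℝ (Fin n))) (Q : ℝ)
    (T : EuclideanSpace ℝ (Fin n) ≃ₗ[ℝ] EuclideanSpace ℝ (Fin n))
    (hT : ∀ v w : EuclideanSpace ℝ (Fin n), ‖v‖ = 1 → ‖w‖ = 1 → ‖T v‖ ≤ Q * ‖T w‖) :
    (Q ^ (n - 1))⁻¹ * Iplus n n s ≤
        |LinearMap.det T.toLinearMap|⁻¹ * Iplus n n (s.comp T.toLinearMap) ∧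
      |LinearMap.det T.toLinearMap|⁻¹ * Iplus n n (s.comp T.toLinearMap) ≤
        Q ^ (n - 1) * Iplus n n s := by
  have : Nonempty (Fin n) := Fin.pos_iff_nonempty.1 hn
  obtain ⟨v, w, hv, hw, hbounds⟩ := T.toLinearMap.exists_sphere_norm_apply_bounds
  simp only [LinearEquiv.coe_coe] at hbounds
  obtain ⟨hlower, hupper⟩ := inv_abs_det_mul_Iplus_comp_mem_Icc s T hv hw
    (fun x => (hbounds x).1) (fun x => (hbounds x).2)
  have hm : 0 < ‖T v‖ := T.norm_apply_pos (by rintro rfl; simp at hv)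
  have hM : 0 < ‖T w‖ := T.norm_apply_pos (by rintro rfl; simp at hw)
  have hratio : ‖T w‖ / ‖T v‖ ≤ Q := (div_le_iff₀ hm).2 (hT w v hw hv)
  have hI := Iplus_nonneg s (p := n)
  refine ⟨le_trans ?_ hlower, hupper.trans (by gcongr)⟩
  rw [← inv_div, inv_pow]
  gcongr

/-- Let `s` be a seminorm on `ℝⁿ`, `Q ≥ 1`, and `T : ℝⁿ → ℝⁿ` bijective linear such that
the norm `v ↦ |T v|` is `Q`-quasi-conformal. Then
`Q^{-(n-1)}·𝓘ⁿ_+(s) ≤ |det T|⁻¹·𝓘ⁿ_+(s ∘ T) ≤ Q^{n-1}·𝓘ⁿ_+(s)`. -/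
theorem Iplus_comp_quasiconformal (n : ℕ) (hn : 1 ≤ n)
    (s : Seminorm ℝ (EuclideanSpace ℝ (Fin n))) (Q : ℝ) (hQ : 1 ≤ Q)
    (T : EuclideanSpace ℝ (Fin n) ≃ₗ[ℝ] EuclideanSpace ℝ (Fin n))
    (hT : ∀ v w : EuclideanSpace ℝ (Fin n), ‖v‖ = 1 → ‖w‖ = 1 → ‖T v‖ ≤ Q * ‖T w‖) :
    (Q ^ (n - 1))⁻¹ * Iplus n n s ≤
        |LinearMap.det T.toLinearMap|⁻¹ * Iplus n n (s.comp T.toLinearMap) ∧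
      |LinearMap.det T.toLinearMap|⁻¹ * Iplus n n (s.comp T.toLinearMap) ≤
        Q ^ (n - 1) * Iplus n n s :=
  Iplus_comp_quasiconformal_general n hn s Q T hT
end

section
/- Let n ≥ 1, let s be a seminorm on ℝⁿ, let Q ≥ 1, and let T : ℝⁿ → ℝⁿ be a bijective linear map such that the norm v ↦ |T(v)| (Euclidean norm of T(v)) is Q-quasi-conformal. Then Q^{−2(n−1)}·𝓘ⁿ_avg(s) ≤ |det T|^{−1}·𝓘ⁿ_avg(s ∘ T) ≤ Q^{2(n−1)}·𝓘ⁿ_avg(s). -/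
/-!
Let `M` and `m` be the largest and the smallest value of `‖T v‖` on the unit sphere, so that
`M ≤ Q m`. The radial projection `v ↦ T v / ‖T v‖` maps the sphere to itself, and its inverse
`v ↦ T⁻¹ v / ‖T⁻¹ v‖` is `M / m`-Lipschitz there, so it distorts `H^{n-1}` by at most
`(M / m)^{n-1}`. With `s (T v) = ‖T v‖ s (T v / ‖T v‖)` this bounds each of the two averages by the
other, with constants `M^n (M / m)^{n-1}` and `m^{-n} (M / m)^{n-1}`. The singular values of `T`
lie in `[m, M]` and include `m` and `M`, so `M m^{n-1} ≤ |det T| ≤ m M^{n-1}`, and the constants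
combine to `(M / m)^{2(n-1)} ≤ Q^{2(n-1)}`.
-/

open MeasureTheory Metric

/-- `𝓘^p_avg(s) = ω_n⁻¹ ∫_{S^{n-1}} s(v)^p dH^{n-1}(v)`. -/
noncomputable def Iavg (n : ℕ) (p : ℝ) (s : Seminorm ℝ (EuclideanSpace ℝ (Fin n))) : ℝ :=
  (volume (ball (0 : EuclideanSpace ℝ (Fin n)) 1)).toReal⁻¹ *
    ∫ v in sphere (0 : EuclideanSpace ℝ (Fin n)) 1, (s v) ^ p ∂(μH[(n : ℝ) - 1])

open scoped RealInnerProductSpace NNReal ENNReal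

section Normalize

variable {E : Type*} [NormedAddCommGroup E] [InnerProductSpace ℝ E]

theorem norm_sub_sq_eq_mul_norm_normalize_sub_sq_add (x y : E) :
    ‖x - y‖ ^ 2 =
      ‖x‖ * ‖y‖ * ‖NormedSpace.normalize x - NormedSpace.normalize y‖ ^ 2 + (‖x‖ - ‖y‖) ^ 2 := by
  rcases eq_or_ne x 0 with rfl | hx
  · simp
  rcases eq_or_ne y 0 with rfl | hy
  · simp
  have hx' : ‖x‖ ≠ 0 := norm_ne_zero_iff.mpr hx
  have hy' : ‖y‖ ≠ 0 := norm_ne_zero_iff.mpr hy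
  simp only [NormedSpace.normalize, norm_sub_sq_real, norm_smul, real_inner_smul_left,
    real_inner_smul_right, norm_inv, norm_norm]
  field_simp
  ring

theorem mul_norm_normalize_sub_le {r : ℝ} {x y : E} (hr : 0 ≤ r) (hx : r ≤ ‖x‖) (hy : r ≤ ‖y‖) :
    r * ‖NormedSpace.normalize x - NormedSpace.normalize y‖ ≤ ‖x - y‖ := by
  refine le_of_sq_le_sq ?_ (norm_nonneg _)
  calc (r * ‖NormedSpace.normalize x - NormedSpace.normalize y‖) ^ 2
      = r * r * ‖NormedSpace.normalize x - NormedSpace.normalize y‖ ^ 2 := by ring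
    _ ≤ ‖x‖ * ‖y‖ * ‖NormedSpace.normalize x - NormedSpace.normalize y‖ ^ 2 := by gcongr
    _ ≤ ‖x - y‖ ^ 2 := by
        rw [norm_sub_sq_eq_mul_norm_normalize_sub_sq_add x y]
        exact le_add_of_nonneg_right (sq_nonneg _)

end Normalize

theorem NormedSpace.measurable_normalize {V : Type*} [NormedAddCommGroup V] [NormedSpace ℝ V]
    [MeasurableSpace V] [BorelSpace V] : Measurable (NormedSpace.normalize : V → V) := by
  unfold NormedSpace.normalize
  fun_prop

section Stretch

variable {E F : Type*} [NormedAddCommGroup E] [NormedSpace ℝ E] [NormedAddCommGroup F]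
  [NormedSpace ℝ F]

namespace LinearMap

variable (T : E →ₗ[ℝ] F) {u : E}

theorem norm_apply_le_of_isMaxOn (h : IsMaxOn (fun v => ‖T v‖) (sphere 0 1) u) (x : E) :
    ‖T x‖ ≤ ‖T u‖ * ‖x‖ := by
  rcases eq_or_ne x 0 with rfl | hx
  · simp
  have hmem : NormedSpace.normalize x ∈ sphere (0 : E) 1 := by
    simpa using NormedSpace.norm_normalize_eq_one_iff.mpr hx
  calc ‖T x‖ = ‖x‖ * ‖T (NormedSpace.normalize x)‖ := by
        conv_lhs => rw [← NormedSpace.norm_smul_normalize x]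
        rw [map_smul, norm_smul, norm_norm]
    _ ≤ ‖x‖ * ‖T u‖ := by gcongr; exact h hmem
    _ = ‖T u‖ * ‖x‖ := mul_comm _ _

theorem le_norm_apply_of_isMinOn (h : IsMinOn (fun v => ‖T v‖) (sphere 0 1) u) (x : E) :
    ‖T u‖ * ‖x‖ ≤ ‖T x‖ := by
  rcases eq_or_ne x 0 with rfl | hx
  · simp
  have hmem : NormedSpace.normalize x ∈ sphere (0 : E) 1 := by
    simpa using NormedSpace.norm_normalize_eq_one_iff.mpr hx
  calc ‖T u‖ * ‖x‖ = ‖x‖ * ‖T u‖ := mul_comm _ _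
    _ ≤ ‖x‖ * ‖T (NormedSpace.normalize x)‖ := by gcongr; exact h hmem
    _ = ‖T x‖ := by
        conv_rhs => rw [← NormedSpace.norm_smul_normalize x]
        rw [map_smul, norm_smul, norm_norm]

end LinearMap

namespace LinearEquiv

variable (T : E ≃ₗ[ℝ] F) {m M : ℝ}

theorem inv_mul_norm_le_norm_symm_apply (hM : 0 < M) (hup : ∀ x, ‖T x‖ ≤ M * ‖x‖) (y : F) :
    M⁻¹ * ‖y‖ ≤ ‖T.symm y‖ := by
  rw [inv_mul_le_iff₀ hM]
  simpa using hup (T.symm y)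

theorem norm_symm_apply_le_inv_mul (hm : 0 < m) (hlow : ∀ x, m * ‖x‖ ≤ ‖T x‖) (y : F) :
    ‖T.symm y‖ ≤ m⁻¹ * ‖y‖ := by
  rw [le_inv_mul_iff₀ hm]
  simpa using hlow (T.symm y)

end LinearEquiv

end Stretch

theorem LinearMap.lipschitzOnWith_normalize_comp {E F : Type*} [NormedAddCommGroup E]
    [NormedSpace ℝ E] [NormedAddCommGroup F] [InnerProductSpace ℝ F] (T : E →ₗ[ℝ] F) {m M : ℝ}
    (hm : 0 < m) (hlow : ∀ x, m * ‖x‖ ≤ ‖T x‖) (hup : ∀ x, ‖T x‖ ≤ M * ‖x‖) :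
    LipschitzOnWith (M / m).toNNReal (NormedSpace.normalize ∘ T) (sphere 0 1) := by
  refine LipschitzOnWith.of_dist_le_mul fun x hx y hy => ?_
  rw [mem_sphere_zero_iff_norm] at hx hy
  rw [dist_eq_norm, dist_eq_norm]
  calc ‖NormedSpace.normalize (T x) - NormedSpace.normalize (T y)‖ ≤ ‖T x - T y‖ / m :=
        (le_div_iff₀' hm).mpr <| mul_norm_normalize_sub_le hm.le
          (by simpa [hx] using hlow x) (by simpa [hy] using hlow y)
    _ ≤ M * ‖x - y‖ / m := by rw [← map_sub]; gcongr; exact hup _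
    _ = M / m * ‖x - y‖ := by ring
    _ ≤ (M / m).toNNReal * ‖x - y‖ := by gcongr; exact Real.le_coe_toNNReal _

namespace LinearMap

section SingularValues

variable {E F : Type*} [NormedAddCommGroup E] [InnerProductSpace ℝ E] [FiniteDimensional ℝ E]
  [NormedAddCommGroup F] [InnerProductSpace ℝ F] [FiniteDimensional ℝ F] (T : E →ₗ[ℝ] F)

theorem norm_apply_sq_eq_inner_adjoint_comp_self (v : E) : ‖T v‖ ^ 2 = ⟪(adjoint T ∘ₗ T) v, v⟫ := by
  rw [comp_apply, adjoint_inner_left, real_inner_self_eq_norm_sq]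

theorem exists_norm_apply_eq_singularValues_mul {i : ℕ} (hi : i < Module.finrank ℝ E) :
    ∃ v ≠ 0, ‖T v‖ = T.singularValues i * ‖v‖ := by
  obtain ⟨v, hv⟩ := (T.hasEigenvalue_adjoint_comp_self_sq_singularValues hi).exists_hasEigenvector
  refine ⟨v, hv.2, (pow_left_inj₀ (norm_nonneg _) (by have := T.singularValues_nonneg i; positivity)
    two_ne_zero).mp ?_⟩
  rw [norm_apply_sq_eq_inner_adjoint_comp_self, Module.End.mem_eigenspace_iff.mp hv.1,
    real_inner_smul_left, real_inner_self_eq_norm_sq, mul_pow]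
  rfl

theorem singularValues_mem_Icc {m M : ℝ} (hlow : ∀ x, m * ‖x‖ ≤ ‖T x‖)
    (hup : ∀ x, ‖T x‖ ≤ M * ‖x‖) {i : ℕ} (hi : i < Module.finrank ℝ E) :
    T.singularValues i ∈ Set.Icc m M := by
  obtain ⟨v, hv, hTv⟩ := T.exists_norm_apply_eq_singularValues_mul hi
  have hv' : 0 < ‖v‖ := norm_pos_iff.mpr hv
  exact ⟨le_of_mul_le_mul_right (hTv ▸ hlow v) hv', le_of_mul_le_mul_right (hTv ▸ hup v) hv'⟩

theorem exists_singularValues_eq_of_isLocalExtrOn {u : E} (hu : ‖u‖ = 1)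
    (h : IsLocalExtrOn (fun v => ‖T v‖) (sphere 0 1) u) :
    ∃ i < Module.finrank ℝ E, T.singularValues i = ‖T u‖ := by
  set A := (adjoint T ∘ₗ T).toContinuousLinearMap
  have hA : IsSelfAdjoint A :=
    ContinuousLinearMap.isSelfAdjoint_iff_isSymmetric.mpr T.isSymmetric_adjoint_comp_self
  have hAre : A.reApplyInnerSelf = fun v => ‖T v‖ ^ 2 := by
    ext v
    simp [A, ContinuousLinearMap.reApplyInnerSelf_apply, norm_apply_sq_eq_inner_adjoint_comp_self]
  have hextr : IsLocalExtrOn A.reApplyInnerSelf (sphere 0 ‖u‖) u := by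
    rw [hAre, hu]
    rcases h with h | h
    · exact Or.inl (Filter.Eventually.mono h fun v hv => by dsimp only at hv ⊢; gcongr)
    · exact Or.inr (Filter.Eventually.mono h fun v hv => by dsimp only at hv ⊢; gcongr)
  have heig : Module.End.HasEigenvalue (adjoint T ∘ₗ T) (‖T u‖ ^ 2) := by
    have := hA.eq_smul_self_of_isLocalExtrOn hextr
    refine Module.End.hasEigenvalue_of_hasEigenvector (x := u)
      ⟨Module.End.mem_eigenspace_iff.mpr ?_, norm_ne_zero_iff.mp (by simp [hu])⟩
    simpa [hAre, hu, A] using this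
  obtain ⟨i, hi⟩ := T.isSymmetric_adjoint_comp_self.exists_eigenvalues_eq rfl heig
  refine ⟨i, i.2, (pow_left_inj₀ (T.singularValues_nonneg i) (norm_nonneg _) two_ne_zero).mp ?_⟩
  rw [T.sq_singularValues_fin rfl i]
  exact hi

theorem norm_apply_mul_pow_le_abs_det_and_abs_det_le (T : E →ₗ[ℝ] E) {u w : E} (hu : ‖u‖ = 1)
    (hw : ‖w‖ = 1) (hmax : IsMaxOn (fun v => ‖T v‖) (sphere 0 1) u)
    (hmin : IsMinOn (fun v => ‖T v‖) (sphere 0 1) w) :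
    ‖T u‖ * ‖T w‖ ^ (Module.finrank ℝ E - 1) ≤ |LinearMap.det T| ∧
      |LinearMap.det T| ≤ ‖T w‖ * ‖T u‖ ^ (Module.finrank ℝ E - 1) := by
  set n := Module.finrank ℝ E
  have hσ : ∀ i ∈ Finset.range n, T.singularValues i ∈ Set.Icc ‖T w‖ ‖T u‖ := fun i hi =>
    T.singularValues_mem_Icc (T.le_norm_apply_of_isMinOn hmin) (T.norm_apply_le_of_isMaxOn hmax)
      (Finset.mem_range.mp hi)
  have hprod : ∀ i ∈ Finset.range n, |LinearMap.det T| =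
      T.singularValues i * ∏ j ∈ (Finset.range n).erase i, T.singularValues j := fun i hi => by
    rw [← normDet_eq_abs_det, normDet_eq_prod_singularValues, Finset.mul_prod_erase _ _ hi]
  have hcard : ∀ i ∈ Finset.range n, ((Finset.range n).erase i).card = n - 1 := fun i hi => by
    rw [Finset.card_erase_of_mem hi, Finset.card_range]
  obtain ⟨i, hi, hiu⟩ := T.exists_singularValues_eq_of_isLocalExtrOn hu (.inr hmax.localize)
  obtain ⟨j, hj, hjw⟩ := T.exists_singularValues_eq_of_isLocalExtrOn hw (.inl hmin.localize)
  rw [← Finset.mem_range] at hi hj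
  constructor
  · rw [hprod i hi, hiu, ← hcard i hi, ← Finset.prod_const]
    gcongr with k hk
    exact (hσ k (Finset.mem_of_mem_erase hk)).1
  · rw [hprod j hj, hjw, ← hcard j hj, ← Finset.prod_const]
    gcongr with k hk
    · exact fun k _ => T.singularValues_nonneg k
    · exact (hσ k (Finset.mem_of_mem_erase hk)).2

end SingularValues

end LinearMap

theorem lintegral_comp_le_of_lipschitzOnWith_leftInvOn {X : Type*} [EMetricSpace X]
    [MeasurableSpace X] [BorelSpace X] {S : Set X} {φ ψ : X → X} (hφ : Measurable φ)
    (hmaps : Set.MapsTo φ S S) (hinv : Set.LeftInvOn ψ φ S) {K : ℝ≥0}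
    (hψ : LipschitzOnWith K ψ S) {d : ℝ} (hd : 0 ≤ d) {f : X → ℝ≥0∞} (hf : Measurable f) :
    ∫⁻ x in S, f (φ x) ∂μH[d] ≤ K ^ d * ∫⁻ x in S, f x ∂μH[d] := by
  have hmap : (μH[d].restrict S).map φ ≤ (K : ℝ≥0∞) ^ d • μH[d].restrict S := by
    refine Measure.le_iff.mpr fun A hA => ?_
    rw [Measure.map_apply hφ hA, Measure.restrict_apply (hφ hA), Measure.smul_apply,
      Measure.restrict_apply hA, smul_eq_mul]
    calc μH[d] (φ ⁻¹' A ∩ S) ≤ μH[d] (ψ '' (A ∩ S)) :=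
          measure_mono fun x ⟨hxA, hxS⟩ => ⟨φ x, ⟨hxA, hmaps hxS⟩, hinv hxS⟩
      _ ≤ K ^ d * μH[d] (A ∩ S) := (hψ.mono Set.inter_subset_right).hausdorffMeasure_image_le hd
  calc ∫⁻ x in S, f (φ x) ∂μH[d] = ∫⁻ x, f x ∂(μH[d].restrict S).map φ := (lintegral_map hf hφ).symm
    _ ≤ ∫⁻ x, f x ∂((K : ℝ≥0∞) ^ d • μH[d].restrict S) := lintegral_mono' hmap le_rfl
    _ = K ^ d * ∫⁻ x in S, f x ∂μH[d] := lintegral_smul_measure _ _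

theorem Seminorm.continuous_of_finiteDimensional {E : Type*} [NormedAddCommGroup E]
    [NormedSpace ℝ E] [FiniteDimensional ℝ E] (s : Seminorm ℝ E) : Continuous s :=
  continuousOn_univ.mp (s.convexOn.continuousOn isOpen_univ)

section Seminorm

variable {E : Type*} [NormedAddCommGroup E] [InnerProductSpace ℝ E] [FiniteDimensional ℝ E]
  [MeasurableSpace E] [BorelSpace E]

theorem Seminorm.lintegral_sphere_comp_le (s : Seminorm ℝ E) (T : E ≃ₗ[ℝ] E) {m M : ℝ}
    (hm : 0 < m) (hmM : m ≤ M) (hlow : ∀ x, m * ‖x‖ ≤ ‖T x‖) (hup : ∀ x, ‖T x‖ ≤ M * ‖x‖)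
    {p d : ℝ} (hp : 0 ≤ p) (hd : 0 ≤ d) :
    ∫⁻ v in sphere 0 1, ENNReal.ofReal (s (T v) ^ p) ∂μH[d] ≤
      ENNReal.ofReal (M ^ p * (M / m) ^ d) *
        ∫⁻ v in sphere 0 1, ENNReal.ofReal (s v ^ p) ∂μH[d] := by
  have hM : 0 < M := hm.trans_le hmM
  have hTv : ∀ v ∈ sphere (0 : E) 1, 0 < ‖T v‖ := fun v hv =>
    hm.trans_le (by simpa [mem_sphere_zero_iff_norm.mp hv] using hlow v)
  set φ : E → E := NormedSpace.normalize ∘ T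
  set f : E → ℝ≥0∞ := fun v => ENNReal.ofReal (s v ^ p)
  have hpoint : ∀ v ∈ sphere (0 : E) 1,
      ENNReal.ofReal (s (T v) ^ p) ≤ ENNReal.ofReal (M ^ p) * f (φ v) := fun v hv => by
    have hTv_eq : s (T v) = ‖T v‖ * s (φ v) := by
      conv_lhs => rw [← NormedSpace.norm_smul_normalize (T v)]
      rw [map_smul_eq_mul, norm_norm]
      rfl
    rw [← ENNReal.ofReal_mul (by positivity), hTv_eq,
      Real.mul_rpow (norm_nonneg _) (apply_nonneg _ _)]
    gcongr
    simpa [mem_sphere_zero_iff_norm.mp hv] using hup v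
  have hmaps : Set.MapsTo φ (sphere 0 1) (sphere 0 1) := fun v hv => mem_sphere_zero_iff_norm.mpr
      (NormedSpace.norm_normalize_eq_one_iff.mpr (norm_pos_iff.mp (hTv v hv)))
  have hinv : Set.LeftInvOn (NormedSpace.normalize ∘ T.symm) φ (sphere 0 1) := fun v hv => by
    change NormedSpace.normalize (T.symm (‖T v‖⁻¹ • T v)) = v
    rw [map_smul, T.symm_apply_apply, NormedSpace.normalize_smul_of_pos (inv_pos.mpr (hTv v hv)),
      NormedSpace.normalize_eq_self_of_norm_eq_one (mem_sphere_zero_iff_norm.mp hv)]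
  have hψ := T.symm.toLinearMap.lipschitzOnWith_normalize_comp (inv_pos.mpr hM)
    (T.inv_mul_norm_le_norm_symm_apply hM hup) (T.norm_symm_apply_le_inv_mul hm hlow)
  rw [inv_div_inv] at hψ
  have hφ : Measurable φ :=
    NormedSpace.measurable_normalize.comp T.toLinearMap.continuous_of_finiteDimensional.measurable
  have hf : Measurable f :=
    (s.continuous_of_finiteDimensional.measurable.pow_const p).ennreal_ofReal
  calc ∫⁻ v in sphere 0 1, ENNReal.ofReal (s (T v) ^ p) ∂μH[d]
      ≤ ∫⁻ v in sphere 0 1, ENNReal.ofReal (M ^ p) * f (φ v) ∂μH[d] :=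
        setLIntegral_mono' isClosed_sphere.measurableSet hpoint
    _ = ENNReal.ofReal (M ^ p) * ∫⁻ v in sphere 0 1, f (φ v) ∂μH[d] :=
        lintegral_const_mul' _ _ ENNReal.ofReal_ne_top
    _ ≤ ENNReal.ofReal (M ^ p) * ((M / m).toNNReal ^ d * ∫⁻ v in sphere 0 1, f v ∂μH[d]) := by
        gcongr
        exact lintegral_comp_le_of_lipschitzOnWith_leftInvOn hφ hmaps hinv hψ hd hf
    _ = ENNReal.ofReal (M ^ p * (M / m) ^ d) * ∫⁻ v in sphere 0 1, f v ∂μH[d] := by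
        rw [← mul_assoc, ← ENNReal.ofReal.eq_1, ENNReal.ofReal_rpow_of_nonneg (by positivity) hd,
          ← ENNReal.ofReal_mul (by positivity)]

end Seminorm

theorem ENNReal.toReal_le_mul_toReal_of_le_mul {a b : ℝ≥0∞} {c c' : ℝ} (hc : 0 ≤ c)
    (hab : a ≤ ENNReal.ofReal c * b) (hba : b ≤ ENNReal.ofReal c' * a) :
    a.toReal ≤ c * b.toReal := by
  by_cases hb : b = ∞
  · have ha : a = ∞ := by
      by_contra ha
      exact ENNReal.mul_ne_top ENNReal.ofReal_ne_top ha (top_le_iff.mp (hb ▸ hba))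
    simp [ha, hb]
  · calc a.toReal ≤ (ENNReal.ofReal c * b).toReal :=
          ENNReal.toReal_mono (ENNReal.mul_ne_top ENNReal.ofReal_ne_top hb) hab
      _ = c * b.toReal := by rw [ENNReal.toReal_mul, ENNReal.toReal_ofReal hc]

theorem Iavg_nonneg (n : ℕ) (p : ℝ) (s : Seminorm ℝ (EuclideanSpace ℝ (Fin n))) :
    0 ≤ Iavg n p s :=
  mul_nonneg (inv_nonneg.mpr ENNReal.toReal_nonneg)
    (integral_nonneg fun _ => Real.rpow_nonneg (apply_nonneg _ _) _)

theorem Iavg_eq_toReal_lintegral (n : ℕ) {p : ℝ} (s : Seminorm ℝ (EuclideanSpace ℝ (Fin n))) :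
    Iavg n p s = (volume (ball (0 : EuclideanSpace ℝ (Fin n)) 1)).toReal⁻¹ *
      (∫⁻ v in sphere 0 1, ENNReal.ofReal (s v ^ p) ∂μH[(n : ℝ) - 1]).toReal := by
  rw [Iavg, integral_eq_lintegral_of_nonneg_ae
    (.of_forall fun v => Real.rpow_nonneg (apply_nonneg _ _) _)
    (s.continuous_of_finiteDimensional.measurable.pow_const p).aestronglyMeasurable]

theorem Iavg_comp_le_and_le {n : ℕ} (hn : 1 ≤ n) (s : Seminorm ℝ (EuclideanSpace ℝ (Fin n)))
    (T : EuclideanSpace ℝ (Fin n) ≃ₗ[ℝ] EuclideanSpace ℝ (Fin n)) {m M : ℝ} (hm : 0 < m)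
    (hmM : m ≤ M) (hlow : ∀ x, m * ‖x‖ ≤ ‖T x‖) (hup : ∀ x, ‖T x‖ ≤ M * ‖x‖) {p : ℝ}
    (hp : 0 ≤ p) :
    Iavg n p (s.comp T.toLinearMap) ≤ M ^ p * (M / m) ^ (n - 1) * Iavg n p s ∧
      Iavg n p s ≤ (m ^ p)⁻¹ * (M / m) ^ (n - 1) * Iavg n p (s.comp T.toLinearMap) := by
  have hM : 0 < M := hm.trans_le hmM
  have hd : (0 : ℝ) ≤ n - 1 := sub_nonneg.mpr (Nat.one_le_cast.mpr hn)
  have hpow : (M / m) ^ ((n : ℝ) - 1) = (M / m) ^ (n - 1) := by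
    rw [← Real.rpow_natCast, Nat.cast_sub hn, Nat.cast_one]
  have hcomp := s.lintegral_sphere_comp_le T hm hmM hlow hup hp hd
  have hsymm := (s.comp T.toLinearMap).lintegral_sphere_comp_le T.symm (inv_pos.mpr hM)
    (inv_anti₀ hm hmM) (T.inv_mul_norm_le_norm_symm_apply hM hup)
    (T.norm_symm_apply_le_inv_mul hm hlow) hp hd
  simp only [Seminorm.comp_apply, LinearEquiv.coe_coe, LinearEquiv.apply_symm_apply,
    Real.inv_rpow hm.le, inv_div_inv, hpow] at hcomp hsymm
  simp only [Iavg_eq_toReal_lintegral, Seminorm.comp_apply, LinearEquiv.coe_coe]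
  have hω : 0 ≤ (volume (ball (0 : EuclideanSpace ℝ (Fin n)) 1)).toReal⁻¹ :=
    inv_nonneg.mpr ENNReal.toReal_nonneg
  constructor
  · rw [mul_left_comm (M ^ p * _)]
    exact mul_le_mul_of_nonneg_left
      (ENNReal.toReal_le_mul_toReal_of_le_mul (by positivity) hcomp hsymm) hω
  · rw [mul_left_comm ((m ^ p)⁻¹ * _)]
    exact mul_le_mul_of_nonneg_left
      (ENNReal.toReal_le_mul_toReal_of_le_mul (by positivity) hsymm hcomp) hω

theorem inv_pow_mul_le_inv_mul_and_inv_mul_le_pow_mul {a b D M m Q : ℝ} {k : ℕ} (hm : 0 < m)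
    (hmM : m ≤ M) (hMQ : M / m ≤ Q) (ha : 0 ≤ a) (hb : 0 ≤ b)
    (hba : b ≤ M ^ (k + 1) * (M / m) ^ k * a) (hab : a ≤ (m ^ (k + 1))⁻¹ * (M / m) ^ k * b)
    (hD : M * m ^ k ≤ D) (hD' : D ≤ m * M ^ k) :
    (Q ^ (2 * k))⁻¹ * a ≤ D⁻¹ * b ∧ D⁻¹ * b ≤ Q ^ (2 * k) * a := by
  have hM : 0 < M := hm.trans_le hmM
  have hD0 : 0 < D := lt_of_lt_of_le (by positivity) hD
  constructor
  · calc (Q ^ (2 * k))⁻¹ * a ≤ ((M / m) ^ (2 * k))⁻¹ * ((m ^ (k + 1))⁻¹ * (M / m) ^ k * b) := by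
          gcongr
      _ = (m * M ^ k)⁻¹ * b := by rw [div_pow, div_pow]; field_simp; ring
      _ ≤ D⁻¹ * b := by gcongr
  · calc D⁻¹ * b ≤ (M * m ^ k)⁻¹ * (M ^ (k + 1) * (M / m) ^ k * a) := by gcongr
      _ = (M / m) ^ (2 * k) * a := by rw [div_pow, div_pow]; field_simp; ring
      _ ≤ Q ^ (2 * k) * a := by gcongr

theorem Iavg_comp_quasiconformal_general (n : ℕ) (hn : 1 ≤ n)
    (s : Seminorm ℝ (EuclideanSpace ℝ (Fin n))) (Q : ℝ)
    (T : EuclideanSpace ℝ (Fin n) ≃ₗ[ℝ] EuclideanSpace ℝ (Fin n))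
    (hT : ∀ v w : EuclideanSpace ℝ (Fin n), ‖v‖ = 1 → ‖w‖ = 1 → ‖T v‖ ≤ Q * ‖T w‖) :
    (Q ^ (2 * (n - 1)))⁻¹ * Iavg n n s ≤
        |LinearMap.det T.toLinearMap|⁻¹ * Iavg n n (s.comp T.toLinearMap) ∧
      |LinearMap.det T.toLinearMap|⁻¹ * Iavg n n (s.comp T.toLinearMap) ≤
        Q ^ (2 * (n - 1)) * Iavg n n s := by
  have : Nontrivial (EuclideanSpace ℝ (Fin n)) :=
    Module.nontrivial_of_finrank_pos (R := ℝ) (by rw [finrank_euclideanSpace_fin]; omega)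
  have hsphere := isCompact_sphere (0 : EuclideanSpace ℝ (Fin n)) 1
  have hne : (sphere (0 : EuclideanSpace ℝ (Fin n)) 1).Nonempty :=
    NormedSpace.sphere_nonempty.mpr zero_le_one
  have hcont : ContinuousOn (fun v => ‖T v‖) (sphere 0 1) :=
    (continuous_norm.comp T.toLinearMap.continuous_of_finiteDimensional).continuousOn
  obtain ⟨u, hu, hmax⟩ := hsphere.exists_isMaxOn hne hcont
  obtain ⟨w, hw, hmin⟩ := hsphere.exists_isMinOn hne hcont
  have hmM : ‖T w‖ ≤ ‖T u‖ := hmin hu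
  rw [mem_sphere_zero_iff_norm] at hu hw
  have hm : 0 < ‖T w‖ :=
    norm_pos_iff.mpr (T.map_ne_zero_iff.mpr (norm_ne_zero_iff.mp (by simp [hw])))
  have hMQ : ‖T u‖ / ‖T w‖ ≤ Q := (div_le_iff₀ hm).mpr (hT u w hu hw)
  obtain ⟨hcomp, hsymm⟩ := Iavg_comp_le_and_le hn s T hm hmM
    (T.toLinearMap.le_norm_apply_of_isMinOn hmin) (T.toLinearMap.norm_apply_le_of_isMaxOn hmax)
    (p := n) (Nat.cast_nonneg n)
  obtain ⟨hdet_ge, hdet_le⟩ :=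
    T.toLinearMap.norm_apply_mul_pow_le_abs_det_and_abs_det_le hu hw hmax hmin
  simp only [Real.rpow_natCast, finrank_euclideanSpace_fin, LinearEquiv.coe_coe]
    at hcomp hsymm hdet_ge hdet_le
  exact inv_pow_mul_le_inv_mul_and_inv_mul_le_pow_mul hm hmM hMQ (Iavg_nonneg _ _ _)
    (Iavg_nonneg _ _ _) (by rwa [Nat.sub_add_cancel hn]) (by rwa [Nat.sub_add_cancel hn])
    hdet_ge hdet_le

/-- Let `s` be a seminorm on `ℝⁿ`, `Q ≥ 1`, and `T : ℝⁿ → ℝⁿ` bijective linear such that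
the norm `v ↦ |T v|` is `Q`-quasi-conformal. Then
`Q^{-2(n-1)}·𝓘ⁿ_avg(s) ≤ |det T|⁻¹·𝓘ⁿ_avg(s ∘ T) ≤ Q^{2(n-1)}·𝓘ⁿ_avg(s)`. -/
theorem Iavg_comp_quasiconformal (n : ℕ) (hn : 1 ≤ n)
    (s : Seminorm ℝ (EuclideanSpace ℝ (Fin n))) (Q : ℝ) (hQ : 1 ≤ Q)
    (T : EuclideanSpace ℝ (Fin n) ≃ₗ[ℝ] EuclideanSpace ℝ (Fin n))
    (hT : ∀ v w : EuclideanSpace ℝ (Fin n), ‖v‖ = 1 → ‖w‖ = 1 → ‖T v‖ ≤ Q * ‖T w‖) :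
    (Q ^ (2 * (n - 1)))⁻¹ * Iavg n n s ≤
        |LinearMap.det T.toLinearMap|⁻¹ * Iavg n n (s.comp T.toLinearMap) ∧
      |LinearMap.det T.toLinearMap|⁻¹ * Iavg n n (s.comp T.toLinearMap) ≤
        Q ^ (2 * (n - 1)) * Iavg n n s :=
  Iavg_comp_quasiconformal_general n hn s Q T hT
end

section
/- Let n ≥ 1, Q ≥ 1, and let T : ℝⁿ → ℝⁿ be a bijective linear map such that the norm v ↦ |T(v)| (Euclidean norm of T(v)) is Q-quasi-conformal. Then Q^{−(n−1)}·‖T‖ⁿ ≤ |det T| ≤ Q^{n−1}·tⁿ, where ‖T‖ = max{|T(v)| : v ∈ S^{n−1}} is the operator norm of T and t = min{|T(v)| : v ∈ S^{n−1}}. -/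
/-!
Take an orthonormal basis `(eᵢ)` of eigenvectors of `T* T`; then the vectors `T eᵢ` are pairwise
orthogonal. Hence `‖T v‖² = ∑ ‖T eᵢ‖² ⟪eᵢ, v⟫²`, so on the unit sphere `‖T v‖` attains its maximum
and its minimum at basis vectors, and the Gram determinant of `(T eᵢ)` gives
`|det T| = ∏ ‖T eᵢ‖`. Quasi-conformality puts every factor between `‖T‖ / Q` and `Q t`; keeping
one extremal factor and estimating the other `n - 1` gives both bounds.
-/

open Finset Module
open scoped RealInnerProductSpace

namespace Finset

variable {ι : Type*} {s : Finset ι} {f : ι → ℝ} {Q : ℝ} {j : ι}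

theorem prod_le_pow_card_sub_one_mul_pow_card (hf : ∀ i ∈ s, 0 ≤ f i) (hj : j ∈ s)
    (h : ∀ i ∈ s, f i ≤ Q * f j) : ∏ i ∈ s, f i ≤ Q ^ (#s - 1) * f j ^ #s := by
  classical
  obtain ⟨k, hk⟩ := Nat.exists_eq_add_one_of_ne_zero (card_ne_zero_of_mem hj)
  calc ∏ i ∈ s, f i = f j * ∏ i ∈ s.erase j, f i := (mul_prod_erase s f hj).symm
    _ ≤ f j * ∏ _i ∈ s.erase j, Q * f j :=
      mul_le_mul_of_nonneg_left (prod_le_prod (fun i hi ↦ hf i (mem_of_mem_erase hi))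
        fun i hi ↦ h i (mem_of_mem_erase hi)) (hf j hj)
    _ = Q ^ (#s - 1) * f j ^ #s := by
      rw [prod_const, card_erase_of_mem hj, hk, Nat.add_sub_cancel]
      ring

theorem pow_card_le_pow_card_sub_one_mul_prod (hf : ∀ i ∈ s, 0 ≤ f i) (hj : j ∈ s)
    (h : ∀ i ∈ s, f j ≤ Q * f i) : f j ^ #s ≤ Q ^ (#s - 1) * ∏ i ∈ s, f i := by
  classical
  obtain ⟨k, hk⟩ := Nat.exists_eq_add_one_of_ne_zero (card_ne_zero_of_mem hj)
  calc f j ^ #s = f j * ∏ _i ∈ s.erase j, f j := by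
        rw [prod_const, card_erase_of_mem hj, hk, Nat.add_sub_cancel, pow_succ']
    _ ≤ f j * ∏ i ∈ s.erase j, Q * f i :=
      mul_le_mul_of_nonneg_left (prod_le_prod (fun _ _ ↦ hf j hj)
        fun i hi ↦ h i (mem_of_mem_erase hi)) (hf j hj)
    _ = Q ^ (#s - 1) * ∏ i ∈ s, f i := by
      rw [prod_mul_distrib, prod_const, card_erase_of_mem hj, ← mul_prod_erase s f hj]
      ring

end Finset

namespace LinearMap

variable {ι E F : Type*} [Fintype ι] [NormedAddCommGroup E] [InnerProductSpace ℝ E]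
  [NormedAddCommGroup F] [InnerProductSpace ℝ F]

def IsRightSingularBasis (T : E →ₗ[ℝ] F) (b : OrthonormalBasis ι ℝ E) : Prop :=
  Pairwise fun i j ↦ ⟪T (b i), T (b j)⟫ = 0

theorem exists_isRightSingularBasis [FiniteDimensional ℝ E] [FiniteDimensional ℝ F] {n : ℕ}
    (hn : finrank ℝ E = n) (T : E →ₗ[ℝ] F) :
    ∃ b : OrthonormalBasis (Fin n) ℝ E, T.IsRightSingularBasis b := by
  refine ⟨T.isSymmetric_adjoint_comp_self.eigenvectorBasis hn, fun i j hij ↦ ?_⟩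
  dsimp only
  rw [← adjoint_inner_right, ← comp_apply, T.isSymmetric_adjoint_comp_self.apply_eigenvectorBasis,
    inner_smul_right, (OrthonormalBasis.orthonormal _).2 hij, mul_zero]

namespace IsRightSingularBasis

variable {T : E →ₗ[ℝ] F} {b : OrthonormalBasis ι ℝ E}

theorem norm_apply_sq (hb : T.IsRightSingularBasis b) (v : E) :
    ‖T v‖ ^ 2 = ∑ i, ‖T (b i)‖ ^ 2 * ⟪b i, v⟫ ^ 2 := by
  conv_lhs => rw [← b.sum_repr' v]
  rw [← real_inner_self_eq_norm_sq, map_sum, sum_inner]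
  refine sum_congr rfl fun i _ ↦ ?_
  have hoff : ∀ j ≠ i, ⟪T (⟪b i, v⟫ • b i), T (⟪b j, v⟫ • b j)⟫ = 0 := fun j hji ↦ by
    simp [real_inner_smul_left, real_inner_smul_right, hb hji.symm]
  rw [inner_sum, sum_eq_single i (fun j _ ↦ hoff j) (by simp), map_smul,
    real_inner_smul_left, real_inner_smul_right, real_inner_self_eq_norm_sq]
  ring

theorem norm_apply_le {c : ℝ} (hb : T.IsRightSingularBasis b) (hc : 0 ≤ c)
    (h : ∀ i, ‖T (b i)‖ ≤ c) (v : E) : ‖T v‖ ≤ c * ‖v‖ := by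
  refine (sq_le_sq₀ (norm_nonneg _) (by positivity)).1 ?_
  rw [hb.norm_apply_sq, mul_pow, ← b.sum_sq_inner_right v, mul_sum]
  gcongr with i
  exact h i

theorem le_norm_apply {c : ℝ} (hb : T.IsRightSingularBasis b) (hc : 0 ≤ c)
    (h : ∀ i, c ≤ ‖T (b i)‖) (v : E) : c * ‖v‖ ≤ ‖T v‖ := by
  refine (sq_le_sq₀ (by positivity) (norm_nonneg _)).1 ?_
  rw [hb.norm_apply_sq, mul_pow, ← b.sum_sq_inner_right v, mul_sum]
  gcongr with i
  exact h i

theorem isGreatest_norm_apply {i₀ : ι} (hb : T.IsRightSingularBasis b)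
    (h : ∀ i, ‖T (b i)‖ ≤ ‖T (b i₀)‖) :
    IsGreatest {x | ∃ v, ‖v‖ = 1 ∧ ‖T v‖ = x} ‖T (b i₀)‖ := by
  refine ⟨⟨b i₀, b.norm_eq_one i₀, rfl⟩, ?_⟩
  rintro _ ⟨v, hv, rfl⟩
  simpa [hv] using hb.norm_apply_le (norm_nonneg _) h v

theorem isLeast_norm_apply {i₀ : ι} (hb : T.IsRightSingularBasis b)
    (h : ∀ i, ‖T (b i₀)‖ ≤ ‖T (b i)‖) :
    IsLeast {x | ∃ v, ‖v‖ = 1 ∧ ‖T v‖ = x} ‖T (b i₀)‖ := by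
  refine ⟨⟨b i₀, b.norm_eq_one i₀, rfl⟩, ?_⟩
  rintro _ ⟨v, hv, rfl⟩
  simpa [hv] using hb.le_norm_apply (norm_nonneg _) h v

theorem abs_det [FiniteDimensional ℝ E] {T : E →ₗ[ℝ] E} (hb : T.IsRightSingularBasis b) :
    |T.det| = ∏ i, ‖T (b i)‖ := by
  classical
  have hgram : Matrix.gram ℝ (T <| b ·) = Matrix.diagonal fun i ↦ ‖T (b i)‖ ^ 2 := by
    ext i j
    rcases eq_or_ne i j with rfl | hij
    · simp [Matrix.gram_apply]
    · simp [Matrix.gram_apply, hb hij, hij]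
  rw [← normDet_eq_abs_det, ← sq_eq_sq₀ (normDet_nonneg _) (by positivity), ← prod_pow]
  simpa [hgram, Matrix.det_diagonal] using T.normDet_sq_eq_det_gram b

end IsRightSingularBasis

end LinearMap

/-- Let `Q ≥ 1` and `T : ℝⁿ → ℝⁿ` be bijective linear such that the norm `v ↦ |T v|` is
`Q`-quasi-conformal. Then `Q^{-(n-1)}·‖T‖ⁿ ≤ |det T| ≤ Q^{n-1}·tⁿ`, where
`‖T‖ = max{|T v| : v ∈ S^{n-1}}` and `t = min{|T v| : v ∈ S^{n-1}}`. -/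
theorem det_bounds_of_quasiconformal (n : ℕ) (hn : 1 ≤ n) (Q : ℝ) (hQ : 1 ≤ Q)
    (T : EuclideanSpace ℝ (Fin n) ≃ₗ[ℝ] EuclideanSpace ℝ (Fin n))
    (hT : ∀ v w : EuclideanSpace ℝ (Fin n), ‖v‖ = 1 → ‖w‖ = 1 → ‖T v‖ ≤ Q * ‖T w‖) :
    (Q ^ (n - 1))⁻¹ *
        (sSup {x : ℝ | ∃ v : EuclideanSpace ℝ (Fin n), ‖v‖ = 1 ∧ ‖T v‖ = x}) ^ n ≤
      |LinearMap.det T.toLinearMap| ∧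
    |LinearMap.det T.toLinearMap| ≤
      Q ^ (n - 1) *
        (sInf {x : ℝ | ∃ v : EuclideanSpace ℝ (Fin n), ‖v‖ = 1 ∧ ‖T v‖ = x}) ^ n := by
  obtain ⟨b, hb⟩ := T.toLinearMap.exists_isRightSingularBasis finrank_euclideanSpace_fin
  have : Nonempty (Fin n) := ⟨⟨0, hn⟩⟩
  obtain ⟨i₀, hi₀⟩ := Finite.exists_max fun i ↦ ‖T (b i)‖
  obtain ⟨i₁, hi₁⟩ := Finite.exists_min fun i ↦ ‖T (b i)‖
  have hQT : ∀ i j, ‖T (b i)‖ ≤ Q * ‖T (b j)‖ := fun i j ↦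
    hT _ _ (b.norm_eq_one i) (b.norm_eq_one j)
  rw [← LinearEquiv.coe_coe T, (hb.isGreatest_norm_apply hi₀).csSup_eq,
    (hb.isLeast_norm_apply hi₁).csInf_eq, hb.abs_det]
  constructor
  · rw [inv_mul_le_iff₀ (by positivity)]
    simpa using pow_card_le_pow_card_sub_one_mul_prod (f := fun i ↦ ‖T (b i)‖)
      (fun i _ ↦ norm_nonneg _) (mem_univ i₀) fun i _ ↦ hQT i₀ i
  · simpa using prod_le_pow_card_sub_one_mul_pow_card (f := fun i ↦ ‖T (b i)‖)
      (fun i _ ↦ norm_nonneg _) (mem_univ i₁) fun i _ ↦ hQT i i₁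
end

section
/- Let b be a positive-semidefinite symmetric bilinear form on ℝ² and let s be the seminorm s(v) := √(b(v,v)). If 𝓘²_+(s) ≤ 𝓘²_+(s ∘ T) for every T ∈ SL₂(ℝ), then s is conformal, i.e., s(v) = s(w) for all v, w in the unit circle S¹. -/
open MeasureTheory Metric

private lemma quad_le_aux (A B C x y : ℝ) (hxy : x^2+y^2 = 1) :
    A*x^2+2*B*x*y+C*y^2 ≤ (A+C+Real.sqrt ((A-C)^2+4*B^2))/2 := by
  set r := Real.sqrt ((A-C)^2+4*B^2) with hr
  have hrnn : 0 ≤ r := Real.sqrt_nonneg _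
  have hr2 : r^2 = (A-C)^2+4*B^2 := Real.sq_sqrt (by positivity)
  set S := (A-C)*(x^2-y^2)+4*B*x*y with hSdef
  have h1 : (x^2-y^2)^2 + (2*x*y)^2 = 1 := by linear_combination (x^2+y^2+1)*hxy
  have key : r^2 - S^2 = ((A-C)*(2*x*y) - 2*B*(x^2-y^2))^2 := by
    rw [hr2, hSdef]; linear_combination -(((A-C)^2+4*B^2)) * h1
  have hS2 : S^2 ≤ r^2 := by nlinarith [key, sq_nonneg ((A-C)*(2*x*y) - 2*B*(x^2-y^2))]
  have hS : S ≤ r := by nlinarith [hS2, hrnn]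
  have h3 : (A+C)*(x^2+y^2) = A+C := by rw [hxy]; ring
  linarith [hS, h3]

private lemma norm_coords_aux (v : EuclideanSpace ℝ (Fin 2)) (hv : ‖v‖ = 1) :
    (v 0)^2 + (v 1)^2 = 1 := by
  have := EuclideanSpace.norm_eq v
  rw [hv] at this
  have h3 : (∑ i : Fin 2, ‖v i‖^2) = 1 := by
    nlinarith [Real.sq_sqrt (by positivity : (0:ℝ) ≤ ∑ i : Fin 2, ‖v i‖^2),
      Real.sqrt_nonneg (∑ i : Fin 2, ‖v i‖^2), this]
  simpa [Fin.sum_univ_two, Real.norm_eq_abs, sq_abs] using h3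

private noncomputable def Tmap (t t' p q : ℝ) :
    EuclideanSpace ℝ (Fin 2) →ₗ[ℝ] EuclideanSpace ℝ (Fin 2) :=
  Matrix.toEuclideanLin !![t*p^2 + t'*q^2, p*q*(t - t'); p*q*(t - t'), t*q^2 + t'*p^2]

private lemma Tmap_det (t t' p q : ℝ) (htt' : t*t' = 1) (F1 : p^2+q^2 = 1) :
    LinearMap.det (Tmap t t' p q) = 1 := by
  rw [Tmap, Matrix.toEuclideanLin_eq_toLin, LinearMap.det_toLin, Matrix.det_fin_two_of]
  linear_combination (t*t'*(p^2+q^2+1))*F1 + htt'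

private lemma Tmap_apply0 (t t' p q : ℝ) (x : EuclideanSpace ℝ (Fin 2)) :
    Tmap t t' p q x 0 = (t*p^2 + t'*q^2)*x 0 + (p*q*(t - t'))*x 1 := by
  simp [Tmap, Matrix.toEuclideanLin_apply, Matrix.mulVec, dotProduct, Fin.sum_univ_two]

private lemma Tmap_apply1 (t t' p q : ℝ) (x : EuclideanSpace ℝ (Fin 2)) :
    Tmap t t' p q x 1 = (p*q*(t - t'))*x 0 + (t*q^2 + t'*p^2)*x 1 := by
  simp [Tmap, Matrix.toEuclideanLin_apply, Matrix.mulVec, dotProduct, Fin.sum_univ_two]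

private noncomputable def mkvec (p q : ℝ) : EuclideanSpace ℝ (Fin 2) :=
  (WithLp.equiv 2 (Fin 2 → ℝ)).symm ![p, q]

private lemma mkvec_apply0 (p q : ℝ) : mkvec p q 0 = p := rfl
private lemma mkvec_apply1 (p q : ℝ) : mkvec p q 1 = q := rfl
private lemma mkvec_norm (p q : ℝ) (h : p^2+q^2 = 1) : ‖mkvec p q‖ = 1 := by
  rw [EuclideanSpace.norm_eq]
  simp only [Fin.sum_univ_two, Real.norm_eq_abs, sq_abs, mkvec_apply0, mkvec_apply1]
  rw [h]; exact Real.sqrt_one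

private lemma eigen_exists (a c d r L : ℝ) (hrnn : 0 ≤ r) (hr2 : r^2 = (a-c)^2+4*d^2)
    (hL : L = (a+c+r)/2) :
    ∃ p q : ℝ, p^2+q^2 = 1 ∧ a*p^2+2*d*p*q+c*q^2 = L ∧ d*(p^2-q^2)+(c-a)*p*q = 0 := by
  by_cases hd0 : d = 0
  · have hrac : r = |a - c| := by
      have : r^2 = (a-c)^2 := by rw [hr2, hd0]; ring
      nlinarith [abs_nonneg (a-c), sq_abs (a-c), this, hrnn]
  -- r = |a-c| : from r² = |a-c|², both nonneg
    by_cases hac : c ≤ a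
    · refine ⟨1, 0, by norm_num, ?_, by rw [hd0]; ring⟩
      rw [hL, hrac, abs_of_nonneg (by linarith)]; ring
    · refine ⟨0, 1, by norm_num, ?_, by rw [hd0]; ring⟩
      rw [hL, hrac, abs_of_nonpos (by linarith)]; ring
  · have keyid : (L-a)*(L-c) = d^2 := by rw [hL]; linear_combination hr2/4
    have hn2 : 0 < d^2 + (L-a)^2 := by positivity
    set n : ℝ := Real.sqrt (d^2 + (L-a)^2) with hndef
    have hnpos : 0 < n := Real.sqrt_pos.mpr hn2
    have hnsq : n^2 = d^2 + (L-a)^2 := Real.sq_sqrt hn2.le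
    have hnne : n ≠ 0 := hnpos.ne'
    refine ⟨d/n, (L-a)/n, ?_, ?_, ?_⟩
    · calc (d/n)^2+((L-a)/n)^2 = (d^2+(L-a)^2)/n^2 := by ring
        _ = n^2/n^2 := by rw [hnsq]
        _ = 1 := by field_simp
    · have hnum : a*d^2+2*d*d*(L-a)+c*(L-a)^2 = L*(d^2+(L-a)^2) := by
        linear_combination (a-L)*keyid
      calc a*(d/n)^2+2*d*(d/n)*((L-a)/n)+c*((L-a)/n)^2
          = (a*d^2+2*d*d*(L-a)+c*(L-a)^2)/n^2 := by ring
        _ = L*(d^2+(L-a)^2)/n^2 := by rw [hnum]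
        _ = L*n^2/n^2 := by rw [hnsq]
        _ = L := by field_simp
    · have hnum3 : d*(d^2-(L-a)^2)+(c-a)*(d*(L-a)) = 0 := by
        linear_combination (-d)*keyid
      calc d*((d/n)^2-((L-a)/n)^2)+(c-a)*(d/n)*((L-a)/n)
          = (d*(d^2-(L-a)^2)+(c-a)*(d*(L-a)))/n^2 := by ring
        _ = 0 := by rw [hnum3, zero_div]

set_option maxHeartbeats 1000000 in
/-- Let `b` be a positive-semidefinite symmetric bilinear form on `ℝ²` and let `s` be the
seminorm `s(v) = √(b(v,v))`. If `𝓘²_+(s) ≤ 𝓘²_+(s ∘ T)` for every `T ∈ SL₂(ℝ)`, then `s`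
is conformal: `s(v) = s(w)` for all `v, w` on the unit circle. -/
theorem conformal_of_Iplus_min_inner_product
    (b : LinearMap.BilinForm ℝ (EuclideanSpace ℝ (Fin 2)))
    (hsymm : ∀ v w : EuclideanSpace ℝ (Fin 2), b v w = b w v)
    (hpos : ∀ v : EuclideanSpace ℝ (Fin 2), 0 ≤ b v v)
    (s : Seminorm ℝ (EuclideanSpace ℝ (Fin 2)))
    (hs : ∀ v : EuclideanSpace ℝ (Fin 2), s v = Real.sqrt (b v v))
    (h : ∀ T : EuclideanSpace ℝ (Fin 2) →ₗ[ℝ] EuclideanSpace ℝ (Fin 2),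
      LinearMap.det T = 1 → Iplus 2 2 s ≤ Iplus 2 2 (s.comp T)) :
    ∀ v w : EuclideanSpace ℝ (Fin 2), ‖v‖ = 1 → ‖w‖ = 1 → s v = s w := by
  set e0 : EuclideanSpace ℝ (Fin 2) := EuclideanSpace.single 0 1 with he0
  set e1 : EuclideanSpace ℝ (Fin 2) := EuclideanSpace.single 1 1 with he1
  set a : ℝ := b e0 e0 with ha
  set c : ℝ := b e1 e1 with hc
  set d : ℝ := b e0 e1 with hd
  -- quadratic form representation
  have qrepr : ∀ v : EuclideanSpace ℝ (Fin 2),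
      b v v = a*(v 0)^2 + 2*d*(v 0)*(v 1) + c*(v 1)^2 := by
    intro v
    have hv : v = v 0 • e0 + v 1 • e1 := by
      ext i; fin_cases i <;> simp [he0, he1, EuclideanSpace.single_apply]
    have hd' : b e1 e0 = d := by rw [hd]; exact hsymm e1 e0
    conv_lhs => rw [hv]
    simp only [map_add, _root_.map_smul, LinearMap.add_apply, LinearMap.smul_apply,
      smul_eq_mul]
    rw [hd']
    ring
  intro v w hv hw
  rw [hs, hs]
  suffices hb : b v v = b w w by rw [hb]
  by_contra hne
  -- setup
  set r : ℝ := Real.sqrt ((a-c)^2+4*d^2) with hrdef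
  have hrnn : 0 ≤ r := Real.sqrt_nonneg _
  have hr2 : r^2 = (a-c)^2+4*d^2 := Real.sq_sqrt (by positivity)
  have hrpos : 0 < r := by
    rcases lt_or_eq_of_le hrnn with h' | h'
    · exact h'
    · exfalso
      have hac : a = c ∧ d = 0 := by constructor <;> nlinarith [hr2, h'.symm]
      apply hne
      rw [qrepr v, qrepr w, hac.1, hac.2]
      linear_combination c * (norm_coords_aux v hv) - c * (norm_coords_aux w hw)
  set L : ℝ := (a+c+r)/2 with hLdef
  have hann : 0 ≤ a := hpos e0
  have hcnn : 0 ≤ c := hpos e1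
  have hLa : a ≤ L := by nlinarith [hr2, hrnn]
  have hLc : c ≤ L := by nlinarith [hr2, hrnn]
  have hLpos : 0 < L := by rw [hLdef]; linarith
  set mu : ℝ := a + c - L with hmudef
  have hmuL : mu < L := by rw [hmudef, hLdef]; linarith
  -- eigenvector
  obtain ⟨p, q, F1, F2, F3⟩ := eigen_exists a c d r L hrnn hr2 hLdef
  have G4 : a*q^2-2*d*p*q+c*p^2 = mu := by
    rw [hmudef]; linear_combination (a+c)*F1 - F2
  -- eigenvector as a Euclidean vector
  have hunorm : ‖mkvec p q‖ = 1 := mkvec_norm p q F1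
  have humem : mkvec p q ∈ sphere (0 : EuclideanSpace ℝ (Fin 2)) 1 :=
    mem_sphere_zero_iff_norm.mpr hunorm
  haveI : Nonempty (sphere (0 : EuclideanSpace ℝ (Fin 2)) 1) := ⟨⟨mkvec p q, humem⟩⟩
  -- rewrite the summand of Iplus
  have hIv : ∀ x : sphere (0 : EuclideanSpace ℝ (Fin 2)) 1,
      (s x.1) ^ (2:ℝ) = b x.1 x.1 := by
    intro x
    rw [hs, show ((2:ℝ)) = ((2:ℕ):ℝ) by norm_num, Real.rpow_natCast]
    exact Real.sq_sqrt (hpos _)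
  have hbdd : ∀ x : sphere (0 : EuclideanSpace ℝ (Fin 2)) 1, b x.1 x.1 ≤ L := by
    intro x
    have hx : ‖x.1‖ = 1 := mem_sphere_zero_iff_norm.mp x.2
    rw [qrepr]
    exact quad_le_aux a d c _ _ (norm_coords_aux x.1 hx)
  have hIs : Iplus 2 2 s = L := by
    rw [Iplus]
    apply le_antisymm
    · exact ciSup_le fun x => le_of_eq_of_le (hIv x) (hbdd x)
    · have hba : BddAbove (Set.range fun x : sphere (0 : EuclideanSpace ℝ (Fin 2)) 1 =>
          (s x.1) ^ (2:ℝ)) := by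
        refine ⟨L, ?_⟩
        rintro _ ⟨x, rfl⟩
        exact le_of_eq_of_le (hIv x) (hbdd x)
      have hle := le_ciSup hba (⟨mkvec p q, humem⟩ : sphere (0 : EuclideanSpace ℝ (Fin 2)) 1)
      rw [hIv ⟨mkvec p q, humem⟩] at hle
      have hbu : b (mkvec p q) (mkvec p q) = L := by
        rw [qrepr, mkvec_apply0, mkvec_apply1]; exact F2
      rwa [hbu] at hle
  -- the SL₂ contraction
  have hmunn : 0 ≤ mu := by
    have hperp := hpos (mkvec (-q) p)
    rw [qrepr, mkvec_apply0, mkvec_apply1] at hperp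
    nlinarith [hperp, G4]
  set t2 : ℝ := (L + mu)/(2*L) with ht2def
  have hLmupos : 0 < L + mu := by linarith
  have ht2pos : 0 < t2 := by rw [ht2def]; positivity
  set t : ℝ := Real.sqrt t2 with htdef
  have htsq : t^2 = t2 := Real.sq_sqrt ht2pos.le
  have htpos : 0 < t := Real.sqrt_pos.mpr ht2pos
  have htne : t ≠ 0 := htpos.ne'
  set t' : ℝ := t⁻¹ with ht'def
  have htt' : t * t' = 1 := mul_inv_cancel₀ htne
  have hdet : LinearMap.det (Tmap t t' p q) = 1 := Tmap_det t t' p q htt' F1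
  -- bound Iplus of the composed seminorm
  set K : ℝ := max (t^2*L) (t'^2*mu) with hKdef
  have hK1 : t^2*L < L := by
    rw [htsq, ht2def]
    rw [div_mul_eq_mul_div, mul_comm, mul_div_assoc]
    calc L * ((L+mu)/(2*L)) < L * 1 := by
          apply mul_lt_mul_of_pos_left _ hLpos
          rw [div_lt_one (by positivity)]; linarith
      _ = L := mul_one L
  have ht'sq : t'^2 = (2*L)/(L + mu) := by
    rw [ht'def, show (t⁻¹)^2 = (t^2)⁻¹ by rw [inv_pow], htsq, ht2def, inv_div]
  have hK2 : t'^2*mu < L := by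
    rw [ht'sq, div_mul_eq_mul_div, div_lt_iff₀ hLmupos]
    nlinarith [hmuL, hLpos, hmunn]
  have hKL : K < L := max_lt hK1 hK2
  have hcomp_bdd : ∀ x : sphere (0 : EuclideanSpace ℝ (Fin 2)) 1,
      ((s.comp (Tmap t t' p q)) x.1) ^ (2:ℝ) ≤ K := by
    intro x
    have hx : ‖x.1‖ = 1 := mem_sphere_zero_iff_norm.mp x.2
    have hx2 : (x.1 0)^2 + (x.1 1)^2 = 1 := norm_coords_aux x.1 hx
    have hrw : ((s.comp (Tmap t t' p q)) x.1) ^ (2:ℝ) = b (Tmap t t' p q x.1) (Tmap t t' p q x.1) := by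
      rw [Seminorm.comp_apply, hs, show ((2:ℝ)) = ((2:ℕ):ℝ) by norm_num, Real.rpow_natCast]
      exact Real.sq_sqrt (hpos _)
    rw [hrw, qrepr, Tmap_apply0, Tmap_apply1]
    set α : ℝ := p*(x.1 0) + q*(x.1 1) with hαdef
    set β : ℝ := -q*(x.1 0) + p*(x.1 1) with hβdef
    have hαβ : α^2 + β^2 = 1 := by
      rw [hαdef, hβdef]
      linear_combination ((x.1 0)^2 + (x.1 1)^2)*F1 + hx2
    have hval : a*((t*p^2 + t'*q^2)*x.1 0 + (p*q*(t - t'))*x.1 1)^2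
        + 2*d*((t*p^2 + t'*q^2)*x.1 0 + (p*q*(t - t'))*x.1 1)
            *((p*q*(t - t'))*x.1 0 + (t*q^2 + t'*p^2)*x.1 1)
        + c*((p*q*(t - t'))*x.1 0 + (t*q^2 + t'*p^2)*x.1 1)^2
        = t^2*α^2*L + t'^2*β^2*mu := by
      have hcross : (t*p^2 + t'*q^2)*x.1 0 + (p*q*(t - t'))*x.1 1 = t*α*p - t'*β*q := by
        rw [hαdef, hβdef]; ring
      have hcross2 : (p*q*(t - t'))*x.1 0 + (t*q^2 + t'*p^2)*x.1 1 = t*α*q + t'*β*p := by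
        rw [hαdef, hβdef]; ring
      rw [hcross, hcross2]
      linear_combination (t^2*α^2)*F2 + (2*t*t'*α*β)*F3 + (t'^2*β^2)*G4
    rw [hval]
    have hb1 : (t^2*L)*α^2 ≤ K*α^2 :=
      mul_le_mul_of_nonneg_right (le_max_left _ _) (sq_nonneg _)
    have hb2 : (t'^2*mu)*β^2 ≤ K*β^2 :=
      mul_le_mul_of_nonneg_right (le_max_right _ _) (sq_nonneg _)
    have hsum : K*α^2 + K*β^2 = K := by rw [← mul_add, hαβ, mul_one]
    linarith only [hb1, hb2, hsum]
  have hIcomp : Iplus 2 2 (s.comp (Tmap t t' p q)) ≤ K := by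
    rw [Iplus]
    exact ciSup_le fun x => hcomp_bdd x
  have hfin := h (Tmap t t' p q) hdet
  rw [hIs] at hfin
  linarith
end

section
/- Let s be a degenerate seminorm on ℝ², i.e., s(v₀) = 0 for some v₀ ≠ 0. If 𝓘²_+(s) ≤ 𝓘²_+(s ∘ T) for every T ∈ SL₂(ℝ), then s is identically zero. -/
open MeasureTheory Metric

noncomputable def auxT (v₀ : EuclideanSpace ℝ (Fin 2)) :
    EuclideanSpace ℝ (Fin 2) →ₗ[ℝ] EuclideanSpace ℝ (Fin 2) where
  toFun v := (2:ℝ)⁻¹ • v +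
    (((3:ℝ)/2) / (v₀ 0 ^ 2 + v₀ 1 ^ 2) * (v₀ 0 * v 0 + v₀ 1 * v 1)) • v₀
  map_add' x y := by
    ext i; simp; ring
  map_smul' c x := by
    ext i; simp; ring

lemma auxT_det (v₀ : EuclideanSpace ℝ (Fin 2)) (hQ : v₀ 0 ^ 2 + v₀ 1 ^ 2 ≠ 0) :
    LinearMap.det (auxT v₀) = 1 := by
  rw [← LinearMap.det_toMatrix (PiLp.basisFun 2 ℝ (Fin 2)), Matrix.det_fin_two]
  simp [LinearMap.toMatrix_apply, auxT, PiLp.basisFun_apply, PiLp.basisFun_repr,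
    Pi.single_apply]
  field_simp
  ring

/-- Let `s` be a degenerate seminorm on `ℝ²` (i.e. `s(v₀) = 0` for some `v₀ ≠ 0`). If
`𝓘²_+(s) ≤ 𝓘²_+(s ∘ T)` for every `T ∈ SL₂(ℝ)`, then `s` is identically zero. -/
theorem degenerate_Iplus_min_eq_zero (s : Seminorm ℝ (EuclideanSpace ℝ (Fin 2)))
    (v₀ : EuclideanSpace ℝ (Fin 2)) (hv₀ : v₀ ≠ 0) (hdeg : s v₀ = 0)
    (h : ∀ T : EuclideanSpace ℝ (Fin 2) →ₗ[ℝ] EuclideanSpace ℝ (Fin 2),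
      LinearMap.det T = 1 → Iplus 2 2 s ≤ Iplus 2 2 (s.comp T)) :
    ∀ v : EuclideanSpace ℝ (Fin 2), s v = 0 := by
  classical
  -- adding a vector of seminorm zero doesn't change the seminorm
  have key : ∀ x y : EuclideanSpace ℝ (Fin 2), s y = 0 → s (x + y) = s x := by
    intro x y hy
    refine le_antisymm ?_ ?_
    · calc s (x + y) ≤ s x + s y := map_add_le_add s x y
        _ = s x := by rw [hy, add_zero]
    · calc s x = s (x + y + -y) := by rw [add_neg_cancel_right]
        _ ≤ s (x + y) + s (-y) := map_add_le_add s _ _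
        _ = s (x + y) := by rw [map_neg_eq_map, hy, add_zero]
  -- coordinate bound
  have hcoord : ∀ (v : EuclideanSpace ℝ (Fin 2)) (i : Fin 2), |v i| ≤ ‖v‖ := by
    intro v i
    rw [EuclideanSpace.norm_eq]
    have h1 : |v i| = Real.sqrt (‖v i‖ ^ 2) := by
      rw [Real.sqrt_sq_eq_abs, Real.norm_eq_abs, abs_abs]
    rw [h1]
    apply Real.sqrt_le_sqrt
    exact Finset.single_le_sum (f := fun j => ‖v j‖ ^ 2)
      (fun j _ => by positivity) (Finset.mem_univ i)
  set E0 : EuclideanSpace ℝ (Fin 2) := EuclideanSpace.single 0 1 with hE0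
  set E1 : EuclideanSpace ℝ (Fin 2) := EuclideanSpace.single 1 1 with hE1
  have hdecomp : ∀ v : EuclideanSpace ℝ (Fin 2), v = v 0 • E0 + v 1 • E1 := by
    intro v; ext i; fin_cases i <;> simp [hE0, hE1, EuclideanSpace.single_apply]
  set C : ℝ := s E0 + s E1 with hC
  have hsb : ∀ v : EuclideanSpace ℝ (Fin 2), s v ≤ C * ‖v‖ := by
    intro v
    calc s v = s (v 0 • E0 + v 1 • E1) := by rw [← hdecomp]
      _ ≤ s (v 0 • E0) + s (v 1 • E1) := map_add_le_add s _ _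
      _ = |v 0| * s E0 + |v 1| * s E1 := by
          rw [map_smul_eq_mul, map_smul_eq_mul]; simp [Real.norm_eq_abs]
      _ ≤ ‖v‖ * s E0 + ‖v‖ * s E1 := by
          gcongr <;> first | exact apply_nonneg s _ | exact hcoord v _
      _ = C * ‖v‖ := by rw [hC]; ring
  -- boundedness of the sup defining Iplus for any seminorm with bound
  have bdd : ∀ t : Seminorm ℝ (EuclideanSpace ℝ (Fin 2)), (∀ v, ‖v‖ = 1 → t v ≤ C) →
      BddAbove (Set.range fun v : sphere (0 : EuclideanSpace ℝ (Fin 2)) 1 => (t v.1) ^ (2:ℝ)) := by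
    intro t ht
    refine ⟨C ^ (2:ℝ), ?_⟩
    rintro x ⟨v, rfl⟩
    have hv : ‖v.1‖ = 1 := by
      have := v.2; rwa [mem_sphere_zero_iff_norm] at this
    exact Real.rpow_le_rpow (apply_nonneg t _) (ht v.1 hv) (by norm_num)
  have hbddS : BddAbove (Set.range fun v : sphere (0 : EuclideanSpace ℝ (Fin 2)) 1 => (s v.1) ^ (2:ℝ)) :=
    bdd s (fun v hv => by simpa [hv] using hsb v)
  haveI hne : Nonempty (sphere (0 : EuclideanSpace ℝ (Fin 2)) 1) :=
    (NormedSpace.sphere_nonempty.mpr zero_le_one).coe_sort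
  set M := Iplus 2 2 s with hM
  have hle : ∀ v : sphere (0 : EuclideanSpace ℝ (Fin 2)) 1, (s v.1) ^ (2:ℝ) ≤ M :=
    fun v => le_ciSup hbddS v
  have u : sphere (0 : EuclideanSpace ℝ (Fin 2)) 1 := Classical.arbitrary _
  have hM0 : 0 ≤ M := le_trans (Real.rpow_nonneg (apply_nonneg s _) 2) (hle u)
  -- the shrinking map
  have hQ : v₀ 0 ^ 2 + v₀ 1 ^ 2 ≠ 0 := by
    intro hc
    apply hv₀
    have h0 : v₀ 0 = 0 ∧ v₀ 1 = 0 := by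
      constructor <;> nlinarith [sq_nonneg (v₀ 0), sq_nonneg (v₀ 1)]
    ext i; fin_cases i <;> simp [h0.1, h0.2]
  have hTval : ∀ v : EuclideanSpace ℝ (Fin 2), s (auxT v₀ v) = 2⁻¹ * s v := by
    intro v
    have : auxT v₀ v = (2:ℝ)⁻¹ • v +
        (((3:ℝ)/2) / (v₀ 0 ^ 2 + v₀ 1 ^ 2) * (v₀ 0 * v 0 + v₀ 1 * v 1)) • v₀ := rfl
    rw [this, key _ _ (by rw [map_smul_eq_mul, hdeg, mul_zero]), map_smul_eq_mul]
    norm_num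
  -- Iplus of the composed seminorm
  have hcomp : Iplus 2 2 (s.comp (auxT v₀)) ≤ (1/4) * M := by
    apply ciSup_le
    intro v
    have : (s.comp (auxT v₀)) v.1 = 2⁻¹ * s v.1 := by
      rw [Seminorm.comp_apply, hTval]
    rw [this, Real.mul_rpow (by norm_num) (apply_nonneg s _)]
    have h2 : ((2:ℝ)⁻¹) ^ (2:ℝ) = 1/4 := by
      rw [show ((2:ℝ):ℝ) = ((2:ℕ):ℝ) by norm_num, Real.rpow_natCast]; norm_num
    rw [h2]
    have := hle v
    nlinarith [Real.rpow_nonneg (apply_nonneg s v.1) 2]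
  have hMle := h (auxT v₀) (auxT_det v₀ hQ)
  have hM4 : M ≤ (1/4) * M := le_trans hMle hcomp
  have hMz : M = 0 := by linarith
  -- conclude
  intro v
  rcases eq_or_ne v 0 with rfl | hv
  · exact map_zero s
  · set u' : EuclideanSpace ℝ (Fin 2) := ‖v‖⁻¹ • v with hu'
    have hnu : ‖u'‖ = 1 := by
      rw [hu', norm_smul, norm_inv, norm_norm, inv_mul_cancel₀ (norm_ne_zero_iff.mpr hv)]
    have hmem : u' ∈ sphere (0 : EuclideanSpace ℝ (Fin 2)) 1 := by
      rwa [mem_sphere_zero_iff_norm]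
    have h1 : (s u') ^ (2:ℝ) ≤ 0 := by rw [← hMz]; exact hle ⟨u', hmem⟩
    have h2 : (s u') ^ (2:ℝ) = 0 :=
      le_antisymm h1 (Real.rpow_nonneg (apply_nonneg s _) 2)
    have h3 : s u' = 0 := by
      by_contra hc
      have : (0:ℝ) < s u' := lt_of_le_of_ne (apply_nonneg s _) (Ne.symm hc)
      have := Real.rpow_pos_of_pos this 2
      linarith
    have : v = ‖v‖ • u' := by
      rw [hu', smul_smul, mul_inv_cancel₀ (norm_ne_zero_iff.mpr hv), one_smul]
    rw [this, map_smul_eq_mul, h3, mul_zero]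
end

section
/- Let T : ℝ² → ℝ² be a bijective linear map, z₀ ∈ ℝ², and r > 0. Then there exists a biLipschitz homeomorphism ϱ : ℝ² → ℝ² such that ϱ(z) = z₀ + T(z − z₀) for every z in the closed ball B̄(z₀, r), and such that ϱ is smooth on ℝ² ∖ B̄(z₀, r) with its derivative at every point of ℝ² ∖ B̄(z₀, r) being a nonzero conformal linear map. -/
open MeasureTheory Metric Set Function Filter

noncomputable section BiLipAux

/-- Join a point to a translate along a ray inside a set. -/
private lemma biLip_joinedIn_segment {s : Set ℂ} (x v : ℂ) (T : ℝ) (hT : 0 ≤ T)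
    (h : ∀ t : ℝ, 0 ≤ t → t ≤ T → x + t • v ∈ s) :
    JoinedIn s x (x + T • v) := by
  refine ⟨⟨⟨fun u => x + ((u : ℝ) * T) • v, by fun_prop⟩, by simp, by simp⟩, fun u => ?_⟩
  exact h _ (mul_nonneg u.2.1 hT) (mul_le_of_le_one_left hT u.2.2)

private lemma biLip_isPathConnected_norm_ge (R : ℝ) (hR : 0 < R) :
    IsPathConnected {w : ℂ | R ≤ ‖w‖} := by
  have hrank : (1 : Cardinal) < Module.rank ℝ ℂ := by
    rw [Complex.rank_real_complex]; norm_num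
  have hsph : IsPathConnected (sphere (0:ℂ) R) := isPathConnected_sphere hrank 0 hR.le
  have hsub : sphere (0:ℂ) R ⊆ {w : ℂ | R ≤ ‖w‖} := by
    intro w hw
    rw [mem_sphere_iff_norm, sub_zero] at hw
    exact mem_setOf.mpr hw.ge
  have hbase : (R : ℂ) ∈ sphere (0:ℂ) R := by
    simp [Complex.norm_real, abs_of_pos hR]
  -- every point of the set is joined to its radial projection on the sphere
  have hradial : ∀ w : ℂ, R ≤ ‖w‖ → JoinedIn {w : ℂ | R ≤ ‖w‖} w ((R / ‖w‖) • w) := by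
    intro w hw
    have hw0 : 0 < ‖w‖ := lt_of_lt_of_le hR hw
    set c : ℝ := R / ‖w‖ with hc
    have hc0 : 0 < c := div_pos hR hw0
    have hc1 : c ≤ 1 := by
      rw [hc, div_le_one hw0]; exact hw
    refine ⟨⟨⟨fun u => ((1 - (u:ℝ)) + u * c) • w, by fun_prop⟩, by simp, by simp⟩, fun u => ?_⟩
    have hu0 : (0:ℝ) ≤ u := u.2.1
    have hu1 : (u:ℝ) ≤ 1 := u.2.2
    have hcoef : c ≤ (1 - (u:ℝ)) + u * c := by nlinarith
    have hcoef0 : 0 ≤ (1 - (u:ℝ)) + u * c := le_trans hc0.le hcoef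
    show R ≤ ‖((1 - (u:ℝ)) + u * c) • w‖
    rw [norm_smul, Real.norm_of_nonneg hcoef0]
    have : c * ‖w‖ = R := by rw [hc, div_mul_cancel₀ _ hw0.ne']
    nlinarith
  rcases hsph with ⟨b, hb, hjoin⟩
  refine ⟨b, hsub hb, ?_⟩
  intro y hy
  have hy' : R ≤ ‖y‖ := hy
  have h1 := hradial y hy'
  have hproj : (R / ‖y‖) • y ∈ sphere (0:ℂ) R := by
    have hy0 : 0 < ‖y‖ := lt_of_lt_of_le hR hy'
    rw [mem_sphere_iff_norm, sub_zero, norm_smul, Real.norm_of_nonneg (div_nonneg hR.le hy0.le),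
      div_mul_cancel₀ _ hy0.ne']
  have h2 : JoinedIn {w : ℂ | R ≤ ‖w‖} ((R / ‖y‖) • y) b :=
    ((hjoin hproj).mono hsub).symm
  exact (h1.trans h2).symm

/-- The complement of a nonempty convex compact subset of `ℂ` is path connected. -/
private lemma biLip_isPathConnected_compl {E : Set ℂ} (hconv : Convex ℝ E)
    (hcomp : IsCompact E) (hne : E.Nonempty) : IsPathConnected Eᶜ := by
  obtain ⟨M, hM⟩ := hcomp.isBounded.subset_closedBall 0
  set R : ℝ := max M 0 + 1 with hRdef
  have hR0 : 0 < R := by positivity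
  have hMR : M < R := lt_of_le_of_lt (le_max_left _ _) (by rw [hRdef]; linarith)
  have hsub : {w : ℂ | R ≤ ‖w‖} ⊆ Eᶜ := by
    intro w hw hwE
    have h1 := hM hwE
    rw [mem_closedBall, dist_zero_right] at h1
    have h2 : R ≤ ‖w‖ := hw
    linarith
  have hA := biLip_isPathConnected_norm_ge R hR0
  obtain ⟨a, haE⟩ := hne
  have hRmem : (R:ℂ) ∈ {w : ℂ | R ≤ ‖w‖} := by
    simp [Complex.norm_real, abs_of_pos hR0]
  refine ⟨(R:ℂ), hsub hRmem, ?_⟩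
  intro y hy
  obtain ⟨f, u, hfE, hfy⟩ := geometric_hahn_banach_closed_point hconv hcomp.isClosed hy
  have hfv : 0 < f (y - a) := by
    rw [map_sub]; linarith [hfE a haE]
  have hv : y - a ≠ 0 := by
    intro h; rw [h, map_zero] at hfv; exact lt_irrefl _ hfv
  have hvn : 0 < ‖y - a‖ := norm_pos_iff.mpr hv
  set T : ℝ := (R + ‖y‖) / ‖y - a‖ with hTdef
  have hT : 0 ≤ T := div_nonneg (by positivity) hvn.le
  have hseg : ∀ t : ℝ, 0 ≤ t → t ≤ T → y + t • (y - a) ∈ Eᶜ := by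
    intro t ht _ hmem
    have h1 := hfE _ hmem
    rw [map_add, _root_.map_smul, smul_eq_mul] at h1
    nlinarith
  have h1 : JoinedIn Eᶜ y (y + T • (y - a)) := biLip_joinedIn_segment y _ T hT hseg
  have hend : R ≤ ‖y + T • (y - a)‖ := by
    have hTn : ‖T • (y - a)‖ = R + ‖y‖ := by
      rw [norm_smul, Real.norm_of_nonneg hT, hTdef]
      exact div_mul_cancel₀ _ hvn.ne'
    have h3 : ‖T • (y - a)‖ - ‖y‖ ≤ ‖y + T • (y - a)‖ := by
      have h4 := norm_sub_norm_le (T • (y - a)) (-y)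
      rw [norm_neg, sub_neg_eq_add, add_comm (T • (y - a)) y] at h4
      linarith
    linarith
  have h2 : JoinedIn Eᶜ (y + T • (y - a)) (R:ℂ) :=
    (hA.joinedIn _ hend _ hRmem).mono hsub
  exact (h1.trans h2).symm

end BiLipAux
private lemma biLip_core (α β : ℂ) (hβα : ‖β‖ < ‖α‖) (r : ℝ) (hr : 0 < r) :
    ∃ ϱ : ℂ → ℂ,
      Function.Bijective ϱ ∧
      (∃ K : NNReal, 1 ≤ K ∧ LipschitzWith K ϱ ∧ AntilipschitzWith K ϱ) ∧
      (∀ z ∈ closedBall (0:ℂ) r, ϱ z = α * z + β * (starRingEnd ℂ) z) ∧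
      ContDiffOn ℝ (⊤ : ℕ∞) ϱ (closedBall (0:ℂ) r)ᶜ ∧
      (∀ z ∉ closedBall (0:ℂ) r, IsConformalMap (fderiv ℝ ϱ z)) := by
  set g : ℂ → ℂ := fun z => if ‖z‖ ≤ r then (starRingEnd ℂ) z else (r:ℂ)^2 / z with hgdef
  set ϱ : ℂ → ℂ := fun z => α * z + β * g z with hϱdef
  have hin : ∀ z : ℂ, ‖z‖ ≤ r → g z = (starRingEnd ℂ) z := fun z h => if_pos h
  have hout : ∀ z : ℂ, r ≤ ‖z‖ → g z = (r:ℂ)^2 / z := by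
    intro z h
    rcases le_or_gt (‖z‖) r with h' | h'
    · have hzr : ‖z‖ = r := le_antisymm h' h
      have hz0 : z ≠ 0 := by
        intro h0; rw [h0, norm_zero] at hzr; exact hr.ne hzr
      show (if ‖z‖ ≤ r then (starRingEnd ℂ) z else (r:ℂ)^2 / z) = (r:ℂ)^2 / z
      rw [if_pos h', eq_div_iff hz0, mul_comm, Complex.mul_conj, Complex.normSq_eq_norm_sq, hzr]
      push_cast
      ring
    · show (if ‖z‖ ≤ r then (starRingEnd ℂ) z else (r:ℂ)^2 / z) = (r:ℂ)^2 / z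
      rw [if_neg (not_le.mpr h')]
  -- distance estimate for the exterior formula
  have hob : ∀ z w : ℂ, r ≤ ‖z‖ → r ≤ ‖w‖ →
      dist ((r:ℂ)^2/z) ((r:ℂ)^2/w) ≤ dist z w := by
    intro z w hz hw
    have hz0 : z ≠ 0 := by intro h; rw [h, norm_zero] at hz; linarith
    have hw0 : w ≠ 0 := by intro h; rw [h, norm_zero] at hw; linarith
    have h1 : (r:ℂ)^2/z - (r:ℂ)^2/w = (r:ℂ)^2 * (w - z) / (z * w) := by
      field_simp
    have habsz : 0 < ‖z‖ := lt_of_lt_of_le hr hz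
    have habsw : 0 < ‖w‖ := lt_of_lt_of_le hr hw
    rw [Complex.dist_eq, h1, norm_div, norm_mul, norm_mul, Complex.dist_eq]
    have har : ‖((r:ℂ)^2)‖ = r^2 := by
      rw [norm_pow, Complex.norm_real, Real.norm_of_nonneg hr.le]
    rw [har, div_le_iff₀ (by positivity)]
    have h2 : ‖(w - z)‖ = ‖(z - w)‖ := norm_sub_rev w z
    have h3 : r^2 ≤ ‖z‖ * ‖w‖ := by nlinarith
    have h4 : 0 ≤ ‖(z - w)‖ := norm_nonneg _
    nlinarith
  -- g is a 1-Lipschitz map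
  have hkey : ∀ z w : ℂ, dist (g z) (g w) ≤ dist z w := by
    have main : ∀ z w : ℂ, ‖z‖ ≤ r → dist (g z) (g w) ≤ dist z w := by
      intro z w hz
      rcases le_or_gt (‖w‖) r with hw | hw
      · rw [hin z hz, hin w hw, Complex.dist_conj_conj]
      · -- mixed case : find the crossing point on the segment
        have hcont : ContinuousOn (fun t : ℝ => ‖z + t • (w - z)‖) (Icc 0 1) :=
          continuous_norm.comp_continuousOn
            (by fun_prop : ContinuousOn (fun t : ℝ => z + t • (w - z)) (Icc 0 1))
        have hIcc : r ∈ Icc (‖(z + (0:ℝ) • (w - z))‖) (‖(z + (1:ℝ) • (w - z))‖) := by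
          constructor
          · simpa using hz
          · simpa using hw.le
        obtain ⟨t, htI, htp⟩ := intermediate_value_Icc zero_le_one hcont hIcc
        set p : ℂ := z + t • (w - z) with hpdef
        have hpr : ‖p‖ = r := htp
        have d1 : dist (g z) (g p) = dist z p := by
          rw [hin z hz, hin p hpr.le, Complex.dist_conj_conj]
        have d2 : dist (g p) (g w) ≤ dist p w := by
          rw [hout p hpr.ge, hout w hw.le]
          exact hob p w hpr.ge hw.le
        have d3 : dist z p + dist p w = dist z w := by
          have e1 : z - p = t • (z - w) := by rw [hpdef]; module
          have e2 : p - w = (1 - t) • (z - w) := by rw [hpdef]; module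
          have e3 : dist z p = t * dist z w := by
            rw [dist_eq_norm, e1, norm_smul, Real.norm_of_nonneg htI.1, dist_eq_norm]
          have e4 : dist p w = (1 - t) * dist z w := by
            rw [dist_eq_norm, e2, norm_smul,
              Real.norm_of_nonneg (by linarith [htI.2] : (0:ℝ) ≤ 1 - t), dist_eq_norm]
          rw [e3, e4]; ring
        calc dist (g z) (g w) ≤ dist (g z) (g p) + dist (g p) (g w) := dist_triangle _ _ _
          _ ≤ dist z p + dist p w := by rw [d1]; linarith
          _ = dist z w := d3
    intro z w
    rcases le_or_gt (‖z‖) r with hz | hz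
    · exact main z w hz
    rcases le_or_gt (‖w‖) r with hw | hw
    · rw [dist_comm, dist_comm z w]; exact main w z hw
    · rw [hout z hz.le, hout w hw.le]; exact hob z w hz.le hw.le
  -- Lipschitz and antilipschitz estimates
  set a : ℝ := ‖α‖ with hadef
  set b : ℝ := ‖β‖ with hbdef
  have hb0 : 0 ≤ b := norm_nonneg β
  have hab : 0 < a - b := sub_pos.mpr hβα
  have ha0 : 0 < a := lt_of_le_of_lt hb0 hβα
  have hdiff : ∀ z w : ℂ, ϱ z - ϱ w = α * (z - w) + β * (g z - g w) := by
    intro z w; rw [hϱdef]; ring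
  have hlipd : ∀ z w : ℂ, dist (ϱ z) (ϱ w) ≤ (a + b) * dist z w := by
    intro z w
    rw [Complex.dist_eq, hdiff z w]
    calc ‖(α * (z - w) + β * (g z - g w))‖
        ≤ ‖(α * (z - w))‖ + ‖(β * (g z - g w))‖ := norm_add_le _ _
      _ = a * ‖(z - w)‖ + b * ‖(g z - g w)‖ := by rw [norm_mul, norm_mul]
      _ ≤ (a + b) * dist z w := by
          have h1 := hkey z w
          rw [Complex.dist_eq, Complex.dist_eq] at h1
          have h2 : (0:ℝ) ≤ ‖(z - w)‖ := norm_nonneg _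
          have h3 : (0:ℝ) ≤ ‖(g z - g w)‖ := norm_nonneg _
          rw [Complex.dist_eq]
          nlinarith
  have hantid : ∀ z w : ℂ, (a - b) * dist z w ≤ dist (ϱ z) (ϱ w) := by
    intro z w
    rw [Complex.dist_eq z w, Complex.dist_eq (ϱ z) (ϱ w), hdiff z w]
    have h1 : ‖(α * (z - w))‖ - ‖(β * (g z - g w))‖
        ≤ ‖(α * (z - w) + β * (g z - g w))‖ := by
      have h2 := norm_sub_norm_le (α * (z - w)) (-(β * (g z - g w)))
      rw [norm_neg, sub_neg_eq_add] at h2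
      simpa using h2
    have h3 := hkey z w
    rw [Complex.dist_eq, Complex.dist_eq] at h3
    rw [norm_mul, norm_mul] at h1
    have h4 : (0:ℝ) ≤ ‖(g z - g w)‖ := norm_nonneg _
    nlinarith
  set K : NNReal := max 1 (max (Real.toNNReal (a + b)) (Real.toNNReal ((a - b)⁻¹))) with hKdef
  have hK1 : 1 ≤ K := le_max_left _ _
  have hKub : a + b ≤ (K : ℝ) := by
    have h1 : (Real.toNNReal (a + b) : ℝ) = a + b := Real.coe_toNNReal _ (by positivity)
    have h2 : Real.toNNReal (a + b) ≤ K := le_trans (le_max_left _ _) (le_max_right _ _)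
    calc a + b = (Real.toNNReal (a + b) : ℝ) := h1.symm
      _ ≤ (K : ℝ) := NNReal.coe_le_coe.mpr h2
  have hKinv : (a - b)⁻¹ ≤ (K : ℝ) := by
    have h1 : (Real.toNNReal ((a - b)⁻¹) : ℝ) = (a - b)⁻¹ := Real.coe_toNNReal _ (by positivity)
    have h2 : Real.toNNReal ((a - b)⁻¹) ≤ K := le_trans (le_max_right _ _) (le_max_right _ _)
    calc (a - b)⁻¹ = (Real.toNNReal ((a - b)⁻¹) : ℝ) := h1.symm
      _ ≤ (K : ℝ) := NNReal.coe_le_coe.mpr h2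
  have hlip : LipschitzWith K ϱ := by
    apply LipschitzWith.of_dist_le_mul
    intro z w
    have := hlipd z w
    have h2 : (0:ℝ) ≤ dist z w := dist_nonneg
    nlinarith
  have hanti : AntilipschitzWith K ϱ := by
    apply AntilipschitzWith.of_le_mul_dist
    intro z w
    have h1 := hantid z w
    have h5 : (a - b)⁻¹ * ((a - b) * dist z w) = dist z w := by
      field_simp
    have h2 : dist z w ≤ (a - b)⁻¹ * dist (ϱ z) (ϱ w) := by
      rw [← h5]
      exact mul_le_mul_of_nonneg_left h1 (inv_nonneg.mpr hab.le)
    have h3 : (0:ℝ) ≤ dist (ϱ z) (ϱ w) := dist_nonneg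
    nlinarith [mul_le_mul_of_nonneg_right hKinv h3]
  -- formula on the closed ball
  have hball : ∀ z ∈ closedBall (0:ℂ) r, ϱ z = α * z + β * (starRingEnd ℂ) z := by
    intro z hz
    rw [mem_closedBall, dist_zero_right] at hz
    rw [hϱdef]
    simp only []
    rw [hin z hz]
  -- the complement of the ball
  have hsetc : (closedBall (0:ℂ) r)ᶜ = {z : ℂ | r < ‖z‖} := by
    ext z
    simp [mem_closedBall, dist_zero_right, not_le]
  have hopen : IsOpen {z : ℂ | r < ‖z‖} :=
    isOpen_lt continuous_const continuous_norm
  have hform : ∀ z ∈ {z : ℂ | r < ‖z‖}, ϱ z = α * z + β * ((r:ℂ)^2 / z) := by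
    intro z hz
    rw [hϱdef]
    simp only []
    rw [hout z (le_of_lt hz)]
  -- smoothness on the complement
  have hsm : ContDiffOn ℝ (⊤ : ℕ∞) (fun z : ℂ => α * z + β * ((r:ℂ)^2 / z)) {z : ℂ | r < ‖z‖} := by
    have h : ContDiffOn ℂ (⊤ : ℕ∞) (fun z : ℂ => α * z + β * ((r:ℂ)^2 / z)) {z : ℂ | r < ‖z‖} := by
      apply ContDiffOn.add
      · exact (contDiff_const.mul contDiff_id).contDiffOn
      · apply ContDiffOn.mul contDiffOn_const
        apply ContDiffOn.div contDiffOn_const contDiffOn_id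
        intro z hz h0
        simp only [id_eq] at h0
        rw [h0] at hz
        simp only [mem_setOf_eq, norm_zero] at hz
        linarith
    exact h.restrict_scalars ℝ
  have hcd : ContDiffOn ℝ (⊤ : ℕ∞) ϱ (closedBall (0:ℂ) r)ᶜ := by
    rw [hsetc]
    exact hsm.congr hform
  -- strict derivative at exterior points
  have hstrict : ∀ z : ℂ, r < ‖z‖ →
      ∃ c : ℂ, c ≠ 0 ∧ HasStrictDerivAt ϱ c z := by
    intro z hz
    have hz0 : z ≠ 0 := by
      intro h0; rw [h0, norm_zero] at hz; linarith
    have hz20 : z^2 ≠ 0 := pow_ne_zero 2 hz0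
    set c : ℂ := α + β * ((r:ℂ)^2 * (-(z^2)⁻¹)) with hcdef
    have hinv : HasStrictDerivAt (fun w : ℂ => w⁻¹) (-(z^2)⁻¹) z := hasStrictDerivAt_inv hz0
    have h2 : HasStrictDerivAt (fun w : ℂ => (r:ℂ)^2 / w) ((r:ℂ)^2 * (-(z^2)⁻¹)) z := by
      simpa [div_eq_mul_inv] using hinv.const_mul ((r:ℂ)^2)
    have h3 : HasStrictDerivAt (fun w : ℂ => α * w) α z := by
      simpa using (hasStrictDerivAt_id z).const_mul α
    have h4 : HasStrictDerivAt (fun w : ℂ => α * w + β * ((r:ℂ)^2 / w)) c z := by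
      rw [hcdef]
      exact h3.add (h2.const_mul β)
    have hev : ϱ =ᶠ[nhds z] fun w : ℂ => α * w + β * ((r:ℂ)^2 / w) :=
      eventually_of_mem (hopen.mem_nhds hz) hform
    have h5 : HasStrictDerivAt ϱ c z := h4.congr_of_eventuallyEq hev.symm
    refine ⟨c, ?_, h5⟩
    -- c ≠ 0
    intro h0
    have h6 : α = -(β * ((r:ℂ)^2 * (-(z^2)⁻¹))) := by
      rw [hcdef] at h0
      linear_combination h0
    have h7 : ‖α‖ = b * (r^2 * ((‖z‖)^2)⁻¹) := by
      rw [h6, norm_neg, norm_mul, norm_mul, norm_neg, norm_inv, norm_pow, norm_pow,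
        Complex.norm_real, Real.norm_of_nonneg hr.le, hbdef]
    have h8 : r^2 * ((‖z‖)^2)⁻¹ ≤ 1 := by
      rw [mul_inv_le_iff₀ (by nlinarith : (0:ℝ) < (‖z‖)^2), one_mul]
      nlinarith
    have h9 : ‖α‖ ≤ b := by
      rw [h7]
      nlinarith
    rw [← hadef] at h9
    linarith
  -- conformality outside the ball
  have hconf : ∀ z ∉ closedBall (0:ℂ) r, IsConformalMap (fderiv ℝ ϱ z) := by
    intro z hzc
    have hz : r < ‖z‖ := by
      have : z ∈ (closedBall (0:ℂ) r)ᶜ := hzc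
      rwa [hsetc] at this
    obtain ⟨c, hc0, hsd⟩ := hstrict z hz
    have hda : DifferentiableAt ℂ ϱ z := hsd.hasDerivAt.differentiableAt
    have hder : deriv ϱ z = c := hsd.hasDerivAt.deriv
    have := hda.conformalAt (by rw [hder]; exact hc0)
    exact conformalAt_iff_isConformalMap_fderiv.mp this
  -- basic facts
  have hcont : Continuous ϱ := hlip.continuous
  have hinj : Function.Injective ϱ := hanti.injective
  have hclosed : IsClosed (Set.range ϱ) :=
    (hanti.isClosedEmbedding hlip.uniformContinuous).isClosed_range
  -- the image of the closed ball
  set E : Set ℂ := ϱ '' closedBall (0:ℂ) r with hEdef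
  have hlin : ∃ Lm : ℂ →ₗ[ℝ] ℂ, ∀ z, Lm z = α * z + β * (starRingEnd ℂ) z := by
    refine ⟨{ toFun := fun z => α * z + β * (starRingEnd ℂ) z,
              map_add' := by intro x y; simp only [map_add]; ring,
              map_smul' := by
                intro s x
                simp only [RingHom.id_apply, Complex.real_smul, map_mul, Complex.conj_ofReal]
                ring }, fun z => rfl⟩
  obtain ⟨Lm, hLm⟩ := hlin
  have hEeq : E = Lm '' closedBall (0:ℂ) r := by
    rw [hEdef]
    apply image_congr
    intro z hz
    rw [hball z hz, hLm]
  have hEconv : Convex ℝ E := by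
    rw [hEeq]
    exact (convex_closedBall _ _).linear_image Lm
  have hEcomp : IsCompact E := (isCompact_closedBall _ _).image hcont
  have hEne : E.Nonempty := ⟨ϱ 0, mem_image_of_mem _ (mem_closedBall_self hr.le)⟩
  have hpc := biLip_isPathConnected_compl hEconv hEcomp hEne
  have hpre : IsPreconnected Eᶜ := hpc.isConnected.isPreconnected
  -- interior points of the range
  have hint : ∀ w, w ∈ Set.range ϱ → w ∉ E → w ∈ interior (Set.range ϱ) := by
    rintro w ⟨z, rfl⟩ hwE
    have hz : r < ‖z‖ := by
      by_contra h
      push_neg at h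
      exact hwE (mem_image_of_mem _ (by
        rw [mem_closedBall, dist_zero_right]; exact h))
    obtain ⟨c, hc0, hsd⟩ := hstrict z hz
    have hmap : Filter.map ϱ (nhds z) = nhds (ϱ z) := hsd.map_nhds_eq hc0
    rw [mem_interior_iff_mem_nhds, ← hmap, mem_map]
    exact Filter.univ_mem' (fun x => mem_range_self x)
  -- a point of the range far away from E
  obtain ⟨M, hM⟩ := hEcomp.isBounded.subset_closedBall 0
  set M' : ℝ := max M 0 with hM'def
  have hM' : E ⊆ closedBall 0 M' := hM.trans (closedBall_subset_closedBall (le_max_left _ _))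
  have hK0 : (0:ℝ) < K := lt_of_lt_of_le zero_lt_one (by exact_mod_cast hK1)
  set s : ℝ := (K : ℝ) * (M' + ‖ϱ 0‖ + 1) with hsdef
  have hs0 : 0 < s := by
    have : 0 ≤ M' := le_max_right _ _
    have h0 : (0:ℝ) ≤ ‖ϱ 0‖ := norm_nonneg _
    positivity
  have hfar : ϱ (s:ℂ) ∉ E := by
    intro hmem
    have h1 : dist (s:ℂ) 0 ≤ (K:ℝ) * dist (ϱ (s:ℂ)) (ϱ 0) := hanti.le_mul_dist _ _
    have h2 : dist (s:ℂ) 0 = s := by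
      rw [dist_zero_right, Complex.norm_real, Real.norm_of_nonneg hs0.le]
    have h3 : dist (ϱ (s:ℂ)) (ϱ 0) ≤ ‖ϱ (s:ℂ)‖ + ‖ϱ 0‖ := dist_le_norm_add_norm _ _
    have h4 : ‖ϱ (s:ℂ)‖ ≤ M' := by
      have := hM' hmem
      rwa [mem_closedBall, dist_zero_right] at this
    have h6 : s ≤ (K:ℝ) * (M' + ‖ϱ 0‖) := by
      calc s = dist (s:ℂ) 0 := h2.symm
        _ ≤ (K:ℝ) * dist (ϱ (s:ℂ)) (ϱ 0) := h1
        _ ≤ (K:ℝ) * (M' + ‖ϱ 0‖) := by nlinarith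
    rw [hsdef] at h6
    nlinarith
  have hfarmem : ϱ (s:ℂ) ∈ Eᶜ ∩ interior (Set.range ϱ) :=
    ⟨hfar, hint _ (mem_range_self _) hfar⟩
  -- the clopen argument
  have hcover : Eᶜ ⊆ interior (Set.range ϱ) ∪ (Set.range ϱ)ᶜ := by
    intro w hw
    by_cases hwS : w ∈ Set.range ϱ
    · exact Or.inl (hint w hwS hw)
    · exact Or.inr hwS
  have hdisj : Disjoint (interior (Set.range ϱ)) (Set.range ϱ)ᶜ :=
    disjoint_compl_right.mono_left interior_subset
  have hsub2 : Eᶜ ⊆ interior (Set.range ϱ) :=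
    hpre.subset_left_of_subset_union isOpen_interior hclosed.isOpen_compl hdisj hcover
      ⟨ϱ (s:ℂ), hfarmem⟩
  have hsurj : Function.Surjective ϱ := by
    intro w
    by_cases hw : w ∈ E
    · obtain ⟨z, -, rfl⟩ := hw
      exact ⟨z, rfl⟩
    · obtain ⟨z, hz⟩ := interior_subset (hsub2 hw)
      exact ⟨z, hz⟩
  exact ⟨ϱ, ⟨hinj, hsurj⟩, ⟨K, hK1, hlip, hanti⟩, hball, hcd, hconf⟩
private lemma biLip_decomp (T : ℂ →ₗ[ℝ] ℂ) (z : ℂ) :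
    T z = ((T 1 - Complex.I * T Complex.I) / 2) * z
        + ((T 1 + Complex.I * T Complex.I) / 2) * (starRingEnd ℂ) z := by
  obtain ⟨x, y, rfl⟩ : ∃ x y : ℝ, z = (x:ℂ) + (y:ℂ) * Complex.I :=
    ⟨z.re, z.im, (Complex.re_add_im z).symm⟩
  have h1 : ((x:ℂ) + (y:ℂ)*Complex.I) = (x:ℝ) • (1:ℂ) + (y:ℝ) • Complex.I := by
    rw [Complex.real_smul, Complex.real_smul, mul_one]
  have h2 : T ((x:ℂ) + (y:ℂ)*Complex.I) = (x:ℂ) * T 1 + (y:ℂ) * T Complex.I := by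
    rw [h1, map_add, LinearMap.map_smul, LinearMap.map_smul, Complex.real_smul,
      Complex.real_smul]
  have h3 : (starRingEnd ℂ) ((x:ℂ) + (y:ℂ)*Complex.I) = (x:ℂ) - (y:ℂ)*Complex.I := by
    rw [map_add, map_mul, Complex.conj_ofReal, Complex.conj_ofReal, Complex.conj_I]
    ring
  rw [h2, h3]
  linear_combination ((y:ℂ) * T Complex.I) * Complex.I_sq

private lemma biLip_abs_ne (T : ℂ ≃ₗ[ℝ] ℂ) :
    ‖((T 1 + Complex.I * T Complex.I) / 2)‖
      ≠ ‖((T 1 - Complex.I * T Complex.I) / 2)‖ := by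
  set α : ℂ := (T 1 - Complex.I * T Complex.I) / 2 with hα
  set β : ℂ := (T 1 + Complex.I * T Complex.I) / 2 with hβ
  intro heq
  have hdec : ∀ z : ℂ, T z = α * z + β * (starRingEnd ℂ) z := fun z =>
    biLip_decomp T.toLinearMap z
  have hT0 : T (0:ℂ) = 0 := map_zero T
  by_cases hβ0 : β = 0
  · have hα0 : α = 0 := by
      have : ‖α‖ = 0 := by rw [← heq, hβ0, norm_zero]
      exact norm_eq_zero.mp this
    have h1 : T 1 = 0 := by rw [hdec 1, hα0, hβ0]; simp
    have h2 : (1:ℂ) = 0 := T.injective (by rw [h1, hT0])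
    exact one_ne_zero h2
  · have hα0 : α ≠ 0 := by
      intro h
      rw [h, norm_zero] at heq
      exact hβ0 (norm_eq_zero.mp heq)
    obtain ⟨w, hw⟩ := IsAlgClosed.exists_pow_nat_eq (-α / β) (n := 2) (by norm_num)
    have hwabs : ‖w‖ = 1 := by
      have h1 : ‖(w^2)‖ = 1 := by
        rw [hw, norm_div, norm_neg, heq, div_self (norm_ne_zero_iff.mpr hα0)]
      rw [norm_pow] at h1
      nlinarith [norm_nonneg w]
    have hw0 : w ≠ 0 := by
      intro h; rw [h, norm_zero] at hwabs; norm_num at hwabs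
    set z : ℂ := (starRingEnd ℂ) w with hzdef
    have hz0 : z ≠ 0 := by
      intro h
      have := congrArg (starRingEnd ℂ) h
      rw [hzdef, Complex.conj_conj, map_zero] at this
      exact hw0 this
    have hTz : T z = 0 := by
      rw [hdec z, hzdef, Complex.conj_conj]
      have hα' : α = -(β * w^2) := by rw [hw]; field_simp
      have h3 : w * (starRingEnd ℂ) w = 1 := by
        rw [Complex.mul_conj, Complex.normSq_eq_norm_sq, hwabs]; norm_num
      have key : α * (starRingEnd ℂ) w + β * w
          = -(β * w) * (w * (starRingEnd ℂ) w) + β * w := by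
        rw [hα']; ring
      rw [key, h3]; ring
    have := T.injective (by rw [hTz, hT0] : T z = T 0)
    exact hz0 this
private lemma biLip_complexMain (T : ℂ ≃ₗ[ℝ] ℂ) (r : ℝ) (hr : 0 < r) :
    ∃ ϱ : ℂ → ℂ,
      Function.Bijective ϱ ∧
      (∃ K : NNReal, 1 ≤ K ∧ LipschitzWith K ϱ ∧ AntilipschitzWith K ϱ) ∧
      (∀ z ∈ closedBall (0:ℂ) r, ϱ z = T z) ∧
      ContDiffOn ℝ (⊤ : ℕ∞) ϱ (closedBall (0:ℂ) r)ᶜ ∧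
      (∀ z ∉ closedBall (0:ℂ) r, IsConformalMap (fderiv ℝ ϱ z)) := by
  set α : ℂ := (T 1 - Complex.I * T Complex.I) / 2 with hα
  set β : ℂ := (T 1 + Complex.I * T Complex.I) / 2 with hβ
  have hdec : ∀ z : ℂ, T z = α * z + β * (starRingEnd ℂ) z := fun z =>
    biLip_decomp T.toLinearMap z
  have hne : ‖β‖ ≠ ‖α‖ := biLip_abs_ne T
  rcases hne.lt_or_gt with h | h
  · obtain ⟨ϱ, h1, h2, h3, h4, h5⟩ := biLip_core α β h r hr
    exact ⟨ϱ, h1, h2, fun z hz => by rw [h3 z hz, hdec z], h4, h5⟩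
  · -- orientation reversing case : compose with conjugation
    have h' : ‖((starRingEnd ℂ) α)‖ < ‖((starRingEnd ℂ) β)‖ := by
      rwa [Complex.norm_conj, Complex.norm_conj]
    obtain ⟨ϱ, h1, ⟨K, hK, hlip, hanti⟩, h3, h4, h5⟩ :=
      biLip_core ((starRingEnd ℂ) β) ((starRingEnd ℂ) α) h' r hr
    have hconjbij : Function.Bijective (fun z : ℂ => (starRingEnd ℂ) z) :=
      Function.Involutive.bijective (fun z => Complex.conj_conj z)
    refine ⟨fun z => (starRingEnd ℂ) (ϱ z), hconjbij.comp h1, ⟨K, hK, ?_, ?_⟩, ?_, ?_, ?_⟩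
    · have := (Complex.isometry_conj.lipschitz.comp hlip)
      rw [one_mul] at this
      exact this
    · have := (Complex.isometry_conj.antilipschitz.comp hanti)
      rw [mul_one] at this
      exact this
    · intro z hz
      show (starRingEnd ℂ) (ϱ z) = T z
      rw [h3 z hz, hdec z]
      simp only [map_add, map_mul, Complex.conj_conj]
      ring
    · have hc : ContDiff ℝ (⊤ : ℕ∞) (fun z : ℂ => (starRingEnd ℂ) z) :=
        Complex.conjLIE.contDiff
      exact hc.comp_contDiffOn h4
    · intro z hz
      have heq : (fun z : ℂ => (starRingEnd ℂ) (ϱ z)) = (⇑Complex.conjCLE ∘ ϱ) := rfl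
      rw [heq, ContinuousLinearEquiv.comp_fderiv]
      exact isConformalMap_conj.comp (h5 z hz)
/-- Let `T : ℝ² → ℝ²` be a bijective linear map, `z₀ ∈ ℝ²`, and `r > 0`. Then there
exists a biLipschitz homeomorphism `ϱ : ℝ² → ℝ²` such that `ϱ(z) = z₀ + T(z - z₀)` on
the closed ball `B̄(z₀, r)`, and `ϱ` is smooth on `ℝ² ∖ B̄(z₀, r)` with its derivative
at every point there being a nonzero conformal linear map. -/
theorem exists_biLipschitz_extension_conformal_outside
    (T : EuclideanSpace ℝ (Fin 2) ≃ₗ[ℝ] EuclideanSpace ℝ (Fin 2))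
    (z₀ : EuclideanSpace ℝ (Fin 2)) (r : ℝ) (hr : 0 < r) :
    ∃ ϱ : EuclideanSpace ℝ (Fin 2) → EuclideanSpace ℝ (Fin 2),
      Function.Bijective ϱ ∧
      (∃ K : NNReal, 1 ≤ K ∧ LipschitzWith K ϱ ∧ AntilipschitzWith K ϱ) ∧
      (∀ z ∈ closedBall z₀ r, ϱ z = z₀ + T (z - z₀)) ∧
      ContDiffOn ℝ (⊤ : ℕ∞) ϱ (closedBall z₀ r)ᶜ ∧
      (∀ z ∉ closedBall z₀ r, IsConformalMap (fderiv ℝ ϱ z)) := by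
  set e : ℂ ≃ₗᵢ[ℝ] EuclideanSpace ℝ (Fin 2) := Complex.orthonormalBasisOneI.repr with hedef
  set Tc : ℂ ≃ₗ[ℝ] ℂ := e.toLinearEquiv.trans (T.trans e.symm.toLinearEquiv) with hTcdef
  obtain ⟨ϱ₀, hbij, ⟨K, hK, hlip, hanti⟩, hball, hsmooth, hconf⟩ := biLip_complexMain Tc r hr
  set c₀ : ℂ := e.symm z₀ with hc₀def
  set ϱ : EuclideanSpace ℝ (Fin 2) → EuclideanSpace ℝ (Fin 2) :=
    fun x => e (c₀ + ϱ₀ (e.symm x - c₀)) with hϱdef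
  have hec₀ : e c₀ = z₀ := e.apply_symm_apply z₀
  have hmemiff : ∀ x : EuclideanSpace ℝ (Fin 2),
      e.symm x - c₀ ∈ closedBall (0:ℂ) r ↔ x ∈ closedBall z₀ r := by
    intro x
    rw [mem_closedBall_zero_iff, ← dist_eq_norm, hc₀def, e.symm.dist_map, mem_closedBall]
  refine ⟨ϱ, ?_, ⟨K, hK, ?_, ?_⟩, ?_, ?_, ?_⟩
  · -- bijective
    have : ϱ = ⇑e ∘ (fun w => c₀ + w) ∘ ϱ₀ ∘ (fun w => w - c₀) ∘ ⇑e.symm := rfl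
    rw [this]
    exact e.bijective.comp (((Equiv.addLeft c₀).bijective).comp
      (hbij.comp (((Equiv.subRight c₀).bijective).comp e.symm.bijective)))
  · -- Lipschitz
    apply LipschitzWith.of_dist_le_mul
    intro x y
    have e1 : dist (ϱ x) (ϱ y) = dist (ϱ₀ (e.symm x - c₀)) (ϱ₀ (e.symm y - c₀)) := by
      rw [hϱdef]
      simp only []
      rw [e.dist_map, dist_add_left]
    have e2 : dist (e.symm x - c₀) (e.symm y - c₀) = dist x y := by
      rw [dist_sub_right, e.symm.dist_map]
    rw [e1, ← e2]
    exact hlip.dist_le_mul _ _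
  · -- Antilipschitz
    apply AntilipschitzWith.of_le_mul_dist
    intro x y
    have e1 : dist (ϱ x) (ϱ y) = dist (ϱ₀ (e.symm x - c₀)) (ϱ₀ (e.symm y - c₀)) := by
      rw [hϱdef]
      simp only []
      rw [e.dist_map, dist_add_left]
    have e2 : dist (e.symm x - c₀) (e.symm y - c₀) = dist x y := by
      rw [dist_sub_right, e.symm.dist_map]
    rw [e1, ← e2]
    exact hanti.le_mul_dist _ _
  · -- formula on the closed ball
    intro x hx
    have hmem : e.symm x - c₀ ∈ closedBall (0:ℂ) r := (hmemiff x).mpr hx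
    show e (c₀ + ϱ₀ (e.symm x - c₀)) = z₀ + T (x - z₀)
    rw [hball _ hmem]
    have h1 : e (e.symm x - c₀) = x - z₀ := by
      rw [map_sub, e.apply_symm_apply, hec₀]
    have h2 : Tc (e.symm x - c₀) = e.symm (T (x - z₀)) := by
      rw [hTcdef]
      simp only [LinearEquiv.trans_apply]
      rw [show e.toLinearEquiv (e.symm x - c₀) = e (e.symm x - c₀) from rfl, h1]
      rfl
    rw [h2, map_add, e.apply_symm_apply, e.apply_symm_apply]
  · -- smoothness on the complement
    have hmaps : Set.MapsTo (fun x : EuclideanSpace ℝ (Fin 2) => e.symm x - c₀)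
        (closedBall z₀ r)ᶜ (closedBall (0:ℂ) r)ᶜ := by
      intro x hx hmem
      exact hx ((hmemiff x).mp hmem)
    have hc1 : ContDiffOn ℝ (⊤ : ℕ∞) (fun x : EuclideanSpace ℝ (Fin 2) => e.symm x - c₀)
        (closedBall z₀ r)ᶜ := (e.symm.contDiff.sub contDiff_const).contDiffOn
    have hc2 : ContDiffOn ℝ (⊤ : ℕ∞) (fun x : EuclideanSpace ℝ (Fin 2) => ϱ₀ (e.symm x - c₀))
        (closedBall z₀ r)ᶜ := hsmooth.comp hc1 hmaps
    have hc3 : ContDiff ℝ (⊤ : ℕ∞) (fun w : ℂ => e (c₀ + w)) :=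
      e.contDiff.comp (contDiff_const.add contDiff_id)
    exact hc3.comp_contDiffOn hc2
  · -- conformality outside the ball
    intro x hx
    have hz : e.symm x - c₀ ∉ closedBall (0:ℂ) r := fun hmem => hx ((hmemiff x).mp hmem)
    set z : ℂ := e.symm x - c₀ with hzdef
    have hopen : IsOpen (closedBall (0:ℂ) r)ᶜ := isOpen_compl_iff.mpr Metric.isClosed_closedBall
    have hdiff : DifferentiableAt ℝ ϱ₀ z :=
      ((hsmooth z hz).differentiableWithinAt (by simp)).differentiableAt (hopen.mem_nhds hz)
    set eCLM : ℂ →L[ℝ] EuclideanSpace ℝ (Fin 2) :=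
      e.toContinuousLinearEquiv.toContinuousLinearMap with heCLM
    set esCLM : EuclideanSpace ℝ (Fin 2) →L[ℝ] ℂ :=
      e.symm.toContinuousLinearEquiv.toContinuousLinearMap with hesCLM
    have hA : HasFDerivAt (fun x : EuclideanSpace ℝ (Fin 2) => e.symm x - c₀) esCLM x :=
      (e.symm.toContinuousLinearEquiv.hasFDerivAt).sub_const c₀
    have hB : HasFDerivAt ϱ₀ (fderiv ℝ ϱ₀ z) z := hdiff.hasFDerivAt
    have hC0 : HasFDerivAt (fun w : ℂ => c₀ + w) (ContinuousLinearMap.id ℝ ℂ) (ϱ₀ z) :=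
      (hasFDerivAt_id _).const_add c₀
    have hC : HasFDerivAt (fun w : ℂ => e (c₀ + w))
        (eCLM.comp (ContinuousLinearMap.id ℝ ℂ)) (ϱ₀ z) :=
      (e.toContinuousLinearEquiv.hasFDerivAt).comp (ϱ₀ z) hC0
    have hBC : HasFDerivAt (fun x : EuclideanSpace ℝ (Fin 2) => ϱ₀ (e.symm x - c₀))
        ((fderiv ℝ ϱ₀ z).comp esCLM) x := hB.comp x hA
    have htot : HasFDerivAt ϱ
        ((eCLM.comp (ContinuousLinearMap.id ℝ ℂ)).comp ((fderiv ℝ ϱ₀ z).comp esCLM)) x :=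
      HasFDerivAt.comp (g := fun w : ℂ => e (c₀ + w))
        (f := fun x : EuclideanSpace ℝ (Fin 2) => ϱ₀ (e.symm x - c₀)) x hC hBC
    rw [htot.fderiv]
    have hconfe : IsConformalMap eCLM := by
      refine ⟨1, one_ne_zero, e.toLinearIsometry, ?_⟩
      ext w
      simp [eCLM]
    have hconfes : IsConformalMap esCLM := by
      refine ⟨1, one_ne_zero, e.symm.toLinearIsometry, ?_⟩
      ext w
      simp [esCLM]
    exact (hconfe.comp isConformalMap_id).comp ((hconf z hz).comp hconfes)
end

section
/- Let ‖·‖ be a norm on ℝ² induced by an inner product and let Q̄ ≥ 1. If 2Q̄·𝓘²_avg(‖·‖) ≤ (Q̄² + 1)·𝓘²_avg(‖·‖ ∘ T) for every T ∈ SL₂(ℝ), then ‖·‖ is Q̄-quasi-conformal. -/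
open MeasureTheory Metric

/-! Let `a` minimise `q(v) = b(v, v)` on the unit circle and let `J` be the quarter turn. Since
`θ ↦ q(cos θ • a + sin θ • J a)` has a minimum at `0`, its derivative `b(a, J a) + b(J a, a)`
vanishes, so `q(a) = min q` and `q(J a) = max q` on the circle. Because `J` preserves `H¹` on the
circle and `q(v) + q(J v)` is constant there, `𝓘²_avg` of `√q` is a fixed positive multiple of
`q(a) + q(J a)`. Testing the hypothesis on `T = diag(t, t⁻¹)` in the basis `(a, J a)` gives
`2Q(β + υ) ≤ (Q² + 1)(t²β + t⁻²υ)` with `β = q(a)`, `υ = q(J a)`, and `t⁴ = υ/β` yields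
`υ ≤ Q²β`, i.e. `max q ≤ Q² min q`. -/

open Module Real
open scoped RealInnerProductSpace ENNReal

attribute [local instance] FiniteDimensional.of_fact_finrank_eq_two

theorem LinearMap.BilinForm.continuous_apply_self {E : Type*} [NormedAddCommGroup E]
    [NormedSpace ℝ E] [FiniteDimensional ℝ E] (c : LinearMap.BilinForm ℝ E) :
    Continuous fun v => c v v :=
  (LinearMap.toContinuousLinearMap
    ((LinearMap.toContinuousLinearMap : (E →ₗ[ℝ] ℝ) ≃ₗ[ℝ] E →L[ℝ] ℝ).toLinearMap ∘ₗ c)).continuous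
    |>.clm_apply continuous_id

namespace Orientation

variable {E : Type*} [NormedAddCommGroup E] [InnerProductSpace ℝ E] [Fact (finrank ℝ E = 2)]
  (o : Orientation ℝ E (Fin 2))

local notation "J" => o.rightAngleRotation

theorem inner_sq_add_inner_rightAngleRotation_sq {a : E} (ha : ‖a‖ = 1) (v : E) :
    ⟪a, v⟫ ^ 2 + ⟪J a, v⟫ ^ 2 = ‖v‖ ^ 2 := by
  simpa [ha] using o.inner_sq_add_areaForm_sq a v

theorem eq_inner_smul_add_inner_rightAngleRotation_smul {a : E} (ha : ‖a‖ = 1) (v : E) :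
    v = ⟪a, v⟫ • a + ⟪J a, v⟫ • J a := by
  refine ext_inner_right ℝ fun w => ?_
  simpa [inner_add_left, inner_smul_left, ha] using
    (o.inner_mul_inner_add_areaForm_mul_areaForm a v w).symm

theorem bilinForm_apply_self_eq (c : LinearMap.BilinForm ℝ E) {a : E} (ha : ‖a‖ = 1) (v : E) :
    c v v = ⟪a, v⟫ ^ 2 * c a a + ⟪a, v⟫ * ⟪J a, v⟫ * (c a (J a) + c (J a) a)
      + ⟪J a, v⟫ ^ 2 * c (J a) (J a) := by
  conv_lhs => rw [o.eq_inner_smul_add_inner_rightAngleRotation_smul ha v]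
  simp only [map_add, map_smul, LinearMap.add_apply, LinearMap.smul_apply, smul_eq_mul]
  ring

theorem bilinForm_apply_self_add_apply_rightAngleRotation (c : LinearMap.BilinForm ℝ E) {a : E}
    (ha : ‖a‖ = 1) (v : E) : c v v + c (J v) (J v) = ‖v‖ ^ 2 * (c a a + c (J a) (J a)) := by
  rw [o.bilinForm_apply_self_eq c ha v, o.bilinForm_apply_self_eq c ha (J v),
    inner_rightAngleRotation_swap, inner_comp_rightAngleRotation,
    ← o.inner_sq_add_inner_rightAngleRotation_sq ha v]
  ring

theorem rotation_coe_apply (θ : ℝ) (x : E) : o.rotation θ x = cos θ • x + sin θ • J x := by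
  simp [rotation_apply]

theorem bilinForm_apply_rightAngleRotation_add_eq_zero_of_isMinOn (c : LinearMap.BilinForm ℝ E)
    {a : E} (ha : ‖a‖ = 1) (hmin : IsMinOn (fun v => c v v) (sphere 0 1) a) :
    c a (J a) + c (J a) a = 0 := by
  set f : ℝ → ℝ := fun θ => c (o.rotation θ a) (o.rotation θ a)
  have hf : ∀ θ, f θ = cos θ ^ 2 * c a a + cos θ * sin θ * (c a (J a) + c (J a) a)
      + sin θ ^ 2 * c (J a) (J a) := fun θ => by
    simp only [f, rotation_coe_apply, map_add, map_smul, LinearMap.add_apply,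
      LinearMap.smul_apply, smul_eq_mul]
    ring
  have hmin' : IsLocalMin f 0 := by
    refine Filter.Eventually.of_forall fun θ => ?_
    simpa [f] using hmin (by simp [ha] : o.rotation θ a ∈ sphere (0 : E) 1)
  have hderiv : HasDerivAt f (c a (J a) + c (J a) a) 0 := by
    have h := (((hasDerivAt_cos 0).pow 2).mul_const (c a a)).add
      ((((hasDerivAt_cos 0).mul (hasDerivAt_sin 0)).mul_const (c a (J a) + c (J a) a)).add
        (((hasDerivAt_sin 0).pow 2).mul_const (c (J a) (J a))))
    refine (h.congr_of_eventuallyEq (.of_forall fun θ => ?_)).congr_deriv (by simp)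
    rw [hf]
    simp only [Pi.add_apply, Pi.mul_apply, Pi.pow_apply]
    ring
  exact hmin'.hasDerivAt_eq_zero hderiv

theorem bilinForm_apply_self_le_of_isMinOn (c : LinearMap.BilinForm ℝ E) {a : E} (ha : ‖a‖ = 1)
    (hmin : IsMinOn (fun v => c v v) (sphere 0 1) a) {v : E} (hv : ‖v‖ = 1) :
    c v v ≤ c (J a) (J a) := by
  have hle : c a a ≤ c (J a) (J a) := hmin (by simp [ha])
  have hunit := o.inner_sq_add_inner_rightAngleRotation_sq ha v
  rw [hv, one_pow] at hunit
  calc c v v = ⟪a, v⟫ ^ 2 * c a a + ⟪J a, v⟫ ^ 2 * c (J a) (J a) := by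
        rw [o.bilinForm_apply_self_eq c ha v,
          o.bilinForm_apply_rightAngleRotation_add_eq_zero_of_isMinOn c ha hmin]
        ring
    _ ≤ ⟪a, v⟫ ^ 2 * c (J a) (J a) + ⟪J a, v⟫ ^ 2 * c (J a) (J a) := by gcongr
    _ = c (J a) (J a) := by linear_combination c (J a) (J a) * hunit

theorem exists_det_eq_one_apply_eq_smul {a : E} (ha : a ≠ 0) {t : ℝ} (ht : t ≠ 0) :
    ∃ T : E →ₗ[ℝ] E, LinearMap.det T = 1 ∧ T a = t • a ∧ T (J a) = t⁻¹ • J a := by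
  set B := o.basisRightAngleRotation a ha
  refine ⟨Matrix.toLin B B (Matrix.diagonal ![t, t⁻¹]), ?_, ?_, ?_⟩
  · simp [LinearMap.det_toLin, ht]
  · simpa [B] using Matrix.toLin_self B B (Matrix.diagonal ![t, t⁻¹]) 0
  · simpa [B] using Matrix.toLin_self B B (Matrix.diagonal ![t, t⁻¹]) 1

theorem lipschitzWith_rotation_apply {a : E} (ha : ‖a‖ = 1) :
    LipschitzWith 2 fun θ : ℝ => o.rotation θ a := by
  refine LipschitzWith.of_dist_le_mul fun x y => ?_
  have hcos := Real.lipschitzWith_cos.dist_le_mul x y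
  have hsin := Real.lipschitzWith_sin.dist_le_mul x y
  simp only [NNReal.coe_one, one_mul, Real.dist_eq] at hcos hsin
  calc dist (o.rotation x a) (o.rotation y a)
      = ‖(cos x - cos y) • a + (sin x - sin y) • J a‖ := by
        rw [dist_eq_norm, rotation_coe_apply, rotation_coe_apply]; congr 1; module
    _ ≤ |cos x - cos y| + |sin x - sin y| := by
        refine (norm_add_le _ _).trans ?_
        simp [norm_smul, ha]
    _ ≤ 2 * dist x y := by rw [Real.dist_eq]; linarith

theorem sphere_subset_image_rotation {a : E} (ha : ‖a‖ = 1) :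
    sphere (0 : E) 1 ⊆ (fun θ : ℝ => o.rotation θ a) '' Set.Icc (-π) π := by
  intro v hv
  refine ⟨(o.oangle a v).toReal,
    ⟨(Real.Angle.neg_pi_lt_toReal _).le, Real.Angle.toReal_le_pi _⟩, ?_⟩
  rw [mem_sphere_zero_iff_norm] at hv
  simp [Real.Angle.coe_toReal, o.rotation_oangle_eq_iff_norm_eq, ha, hv]

end Orientation

section UnitSphere

variable {E : Type*} [NormedAddCommGroup E] [InnerProductSpace ℝ E] [Fact (finrank ℝ E = 2)]

theorem exists_orientation_and_norm_eq_one :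
    Nonempty (Orientation ℝ E (Fin 2)) ∧ ∃ a : E, ‖a‖ = 1 := by
  have : Nontrivial E := Module.nontrivial_of_finrank_eq_succ (Fact.out : finrank ℝ E = 2)
  exact ⟨⟨(finBasisOfFinrankEq ℝ E Fact.out).orientation⟩, exists_norm_eq E zero_le_one⟩

variable [MeasurableSpace E] [BorelSpace E]

theorem hausdorffMeasure_sphere_lt_top : μH[1] (sphere (0 : E) 1) < ∞ := by
  obtain ⟨⟨o⟩, a, ha⟩ := exists_orientation_and_norm_eq_one (E := E)
  calc μH[1] (sphere (0 : E) 1) ≤ μH[1] ((fun θ : ℝ => o.rotation θ a) '' Set.Icc (-π) π) :=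
        measure_mono (o.sphere_subset_image_rotation ha)
    _ ≤ (2 : NNReal) ^ (1 : ℝ) * μH[1] (Set.Icc (-π) π) :=
        (o.lipschitzWith_rotation_apply ha).hausdorffMeasure_image_le zero_le_one _
    _ < ∞ := ENNReal.mul_lt_top (by simp) (by simp [hausdorffMeasure_real])

theorem two_le_hausdorffMeasure_sphere : 2 ≤ μH[1] (sphere (0 : E) 1) := by
  obtain ⟨⟨o⟩, a, ha⟩ := exists_orientation_and_norm_eq_one (E := E)
  have hlip : LipschitzWith 1 fun v => ⟪a, v⟫ := LipschitzWith.of_dist_le_mul fun x y => by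
    simpa [dist_eq_norm, ← inner_sub_right, ha] using abs_real_inner_le_norm a (x - y)
  have hIcc : Set.Icc (-1 : ℝ) 1 ⊆ (fun v => ⟪a, v⟫) '' sphere (0 : E) 1 := by
    rintro x ⟨hx₁, hx₂⟩
    refine ⟨o.rotation (arccos x) a, by simp [ha], ?_⟩
    simp [o.rotation_coe_apply, inner_add_right, inner_smul_right, ha, cos_arccos hx₁ hx₂]
  calc (2 : ℝ≥0∞) = μH[1] (Set.Icc (-1 : ℝ) 1) := by simp [hausdorffMeasure_real]; norm_num
    _ ≤ μH[1] ((fun v => ⟪a, v⟫) '' sphere (0 : E) 1) := measure_mono hIcc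
    _ ≤ (1 : NNReal) ^ (1 : ℝ) * μH[1] (sphere (0 : E) 1) :=
        hlip.hausdorffMeasure_image_le zero_le_one _
    _ = μH[1] (sphere (0 : E) 1) := by simp

end UnitSphere

namespace Orientation

variable {E : Type*} [NormedAddCommGroup E] [InnerProductSpace ℝ E] [Fact (finrank ℝ E = 2)]
  [MeasurableSpace E] [BorelSpace E] (o : Orientation ℝ E (Fin 2))

local notation "J" => o.rightAngleRotation

theorem integral_sphere_bilinForm_apply_self (c : LinearMap.BilinForm ℝ E) {a : E}
    (ha : ‖a‖ = 1) :
    ∫ v in sphere (0 : E) 1, c v v ∂μH[1] =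
      (c a a + c (J a) (J a)) * (μH[1] (sphere (0 : E) 1)).toReal / 2 := by
  set S := sphere (0 : E) 1
  have hint : ∀ f : E → ℝ, Continuous f → IntegrableOn f S μH[1] := fun f hf =>
    hf.continuousOn.integrableOn_of_subset_isCompact (isCompact_sphere 0 1)
      isClosed_sphere.measurableSet subset_rfl hausdorffMeasure_sphere_lt_top.ne
  have hcont := c.continuous_apply_self
  have hrot : ∫ v in S, c (J v) (J v) ∂μH[1] = ∫ v in S, c v v ∂μH[1] := by
    have := ((J).toIsometryEquiv.measurePreserving_hausdorffMeasure 1).setIntegral_preimage_emb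
      (J).toHomeomorph.measurableEmbedding (fun v => c v v) S
    simpa [S, LinearIsometryEquiv.preimage_sphere] using this
  have hsum : ∫ v in S, (c v v + c (J v) (J v)) ∂μH[1] =
      (c a a + c (J a) (J a)) * (μH[1] S).toReal := by
    rw [setIntegral_congr_fun isClosed_sphere.measurableSet
      (g := fun _ => c a a + c (J a) (J a)) fun v hv => ?_, setIntegral_const, smul_eq_mul,
      measureReal_def, mul_comm]
    rw [o.bilinForm_apply_self_add_apply_rightAngleRotation c ha, mem_sphere_zero_iff_norm.1 hv,
      one_pow, one_mul]
  rw [integral_add (hint _ hcont) (hint (fun v => c (J v) (J v)) (hcont.comp (J).continuous)),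
    hrot] at hsum
  linarith

end Orientation

theorem le_sq_mul_of_forall_le {Q β υ : ℝ} (hQ : 1 ≤ Q) (hβ : 0 < β) (hβυ : β ≤ υ)
    (h : ∀ l : ℝ, 0 < l → 2 * Q * (β + υ) ≤ (Q ^ 2 + 1) * (l * β + l⁻¹ * υ)) :
    υ ≤ Q ^ 2 * β := by
  -- at the optimal `l = √(υ / β)` the hypothesis reads `(Q r - 1)(r - Q) ≤ 0`
  set r := √(υ / β)
  have hr : 1 ≤ r := one_le_sqrt.2 ((one_le_div hβ).2 hβυ)
  have hυ : υ = r ^ 2 * β := by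
    rw [sq_sqrt (div_pos (hβ.trans_le hβυ) hβ).le, div_mul_cancel₀ _ hβ.ne']
  have key : Q * (1 + r ^ 2) * β ≤ (Q ^ 2 + 1) * r * β := by
    have := h r (by positivity)
    rw [hυ, show r⁻¹ * (r ^ 2 * β) = r * β by field_simp] at this
    linarith
  have hrQ : r ≤ Q := by
    by_contra! hQr
    nlinarith [mul_pos (by nlinarith : 0 < Q * r - 1) (sub_pos.2 hQr),
      le_of_mul_le_mul_right key hβ]
  rw [hυ]
  gcongr

local notation "ℝ²" => EuclideanSpace ℝ (Fin 2)

instance : Fact (finrank ℝ (ℝ²) = 2) := ⟨finrank_euclideanSpace_fin⟩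

-- Equal to `1`, as `H¹(S¹) = 2π`; the argument only needs it to be positive.
noncomputable def sphereAvgFactor : ℝ :=
  (volume (ball (0 : ℝ²) 1)).toReal⁻¹ * (μH[1] (sphere (0 : ℝ²) 1)).toReal / 2

theorem sphereAvgFactor_pos : 0 < sphereAvgFactor := by
  have hball : 0 < (volume (ball (0 : ℝ²) 1)).toReal :=
    ENNReal.toReal_pos (measure_ball_pos volume _ one_pos).ne' measure_ball_lt_top.ne
  have hsphere : 0 < (μH[1] (sphere (0 : ℝ²) 1)).toReal :=
    ENNReal.toReal_pos (two_le_hausdorffMeasure_sphere.trans_lt' (by norm_num)).ne'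
      hausdorffMeasure_sphere_lt_top.ne
  unfold sphereAvgFactor
  positivity

theorem Orientation.Iavg_two_two_eq (o : Orientation ℝ (ℝ²) (Fin 2))
    (c : LinearMap.BilinForm ℝ (ℝ²)) (σ : Seminorm ℝ (ℝ²))
    (hσ : ∀ v, σ v ^ 2 = c v v) {a : ℝ²} (ha : ‖a‖ = 1) :
    Iavg 2 2 σ =
      sphereAvgFactor * (c a a + c (o.rightAngleRotation a) (o.rightAngleRotation a)) := by
  have hσ' : ∀ v, σ v ^ (2 : ℝ) = c v v := fun v => by rw [rpow_two, hσ]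
  simp only [Iavg, hσ']
  norm_num [o.integral_sphere_bilinForm_apply_self c ha, sphereAvgFactor]
  ring

theorem Orientation.exists_det_eq_one_Iavg_comp_eq (o : Orientation ℝ (ℝ²) (Fin 2))
    (c : LinearMap.BilinForm ℝ (ℝ²)) (σ : Seminorm ℝ (ℝ²)) (hσ : ∀ v, σ v ^ 2 = c v v)
    {a : ℝ²} (ha : ‖a‖ = 1) {l : ℝ} (hl : 0 < l) :
    ∃ T : ℝ² →ₗ[ℝ] ℝ², LinearMap.det T = 1 ∧
      Iavg 2 2 (σ.comp T) = sphereAvgFactor *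
        (l * c a a + l⁻¹ * c (o.rightAngleRotation a) (o.rightAngleRotation a)) := by
  obtain ⟨T, hT, hTa, hTJa⟩ :=
    o.exists_det_eq_one_apply_eq_smul (a := a) (by simp [← norm_ne_zero_iff, ha])
      (sqrt_pos.2 hl).ne'
  refine ⟨T, hT, ?_⟩
  rw [o.Iavg_two_two_eq (c.compl₁₂ T T) (σ.comp T) (fun v => hσ (T v)) ha,
    LinearMap.compl₁₂_apply, LinearMap.compl₁₂_apply, hTa, hTJa]
  simp [← mul_assoc, ← mul_inv, mul_self_sqrt hl.le]

theorem quasiconformal_of_Iavg_inner_product_general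
    (b : LinearMap.BilinForm ℝ (EuclideanSpace ℝ (Fin 2)))
    (hpos : ∀ v : EuclideanSpace ℝ (Fin 2), v ≠ 0 → 0 < b v v)
    (s : Seminorm ℝ (EuclideanSpace ℝ (Fin 2)))
    (hs : ∀ v : EuclideanSpace ℝ (Fin 2), s v = Real.sqrt (b v v))
    (Q : ℝ) (hQ : 1 ≤ Q)
    (h : ∀ T : EuclideanSpace ℝ (Fin 2) →ₗ[ℝ] EuclideanSpace ℝ (Fin 2),
      LinearMap.det T = 1 →
        2 * Q * Iavg 2 2 s ≤ (Q ^ 2 + 1) * Iavg 2 2 (s.comp T)) :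
    ∀ v w : EuclideanSpace ℝ (Fin 2), ‖v‖ = 1 → ‖w‖ = 1 → s v ≤ Q * s w := by
  let o : Orientation ℝ (ℝ²) (Fin 2) := (EuclideanSpace.basisFun (Fin 2) ℝ).toBasis.orientation
  have hsq : ∀ v, s v ^ 2 = b v v := fun v => by
    rw [hs, sq_sqrt]
    rcases eq_or_ne v 0 with rfl | hv
    · simp
    · exact (hpos v hv).le
  obtain ⟨a, ha, hmin⟩ := (isCompact_sphere (0 : ℝ²) 1).exists_isMinOn
    (NormedSpace.sphere_nonempty.2 zero_le_one) b.continuous_apply_self.continuousOn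
  rw [mem_sphere_zero_iff_norm] at ha
  have hβ : 0 < b a a := hpos a (norm_ne_zero_iff.1 (by simp [ha]))
  have hυ : b (o.rightAngleRotation a) (o.rightAngleRotation a) ≤ Q ^ 2 * b a a := by
    refine le_sq_mul_of_forall_le hQ hβ (hmin (by simp [ha])) fun l hl => ?_
    obtain ⟨T, hT, hIavg⟩ := o.exists_det_eq_one_Iavg_comp_eq b s hsq ha hl
    have hsT := h T hT
    rw [o.Iavg_two_two_eq b s hsq ha, hIavg] at hsT
    exact le_of_mul_le_mul_left (by linarith) sphereAvgFactor_pos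
  intro v w hv hw
  have hbv := o.bilinForm_apply_self_le_of_isMinOn b ha hmin hv
  have hbw : b a a ≤ b w w := hmin (by simp [hw])
  rw [← pow_le_pow_iff_left₀ (apply_nonneg s v) (by positivity) two_ne_zero, mul_pow, hsq, hsq]
  nlinarith

/-- Let `‖·‖ = s` be a norm on `ℝ²` induced by an inner product (given by a symmetric
positive-definite bilinear form `b` via `s(v) = √(b(v,v))`) and let `Q̄ ≥ 1`. If
`2Q̄·𝓘²_avg(s) ≤ (Q̄² + 1)·𝓘²_avg(s ∘ T)` for every `T ∈ SL₂(ℝ)`, then `s` is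
`Q̄`-quasi-conformal. -/
theorem quasiconformal_of_Iavg_inner_product
    (b : LinearMap.BilinForm ℝ (EuclideanSpace ℝ (Fin 2)))
    (hsymm : ∀ v w : EuclideanSpace ℝ (Fin 2), b v w = b w v)
    (hpos : ∀ v : EuclideanSpace ℝ (Fin 2), v ≠ 0 → 0 < b v v)
    (s : Seminorm ℝ (EuclideanSpace ℝ (Fin 2)))
    (hs : ∀ v : EuclideanSpace ℝ (Fin 2), s v = Real.sqrt (b v v))
    (Q : ℝ) (hQ : 1 ≤ Q)
    (h : ∀ T : EuclideanSpace ℝ (Fin 2) →ₗ[ℝ] EuclideanSpace ℝ (Fin 2),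
      LinearMap.det T = 1 →
        2 * Q * Iavg 2 2 s ≤ (Q ^ 2 + 1) * Iavg 2 2 (s.comp T)) :
    ∀ v w : EuclideanSpace ℝ (Fin 2), ‖v‖ = 1 → ‖w‖ = 1 → s v ≤ Q * s w :=
  quasiconformal_of_Iavg_inner_product_general b hpos s hs Q hQ h
end

section
/- Let T : ℝ² → ℝ² be a bijective linear map and let s be the norm s(v) := ‖T(v)‖_∞, where ‖(x,y)‖_∞ = max(|x|,|y|). Then s is not Q-quasi-conformal for any Q < √2; equivalently, max{‖T(v)‖_∞ : v ∈ S¹} ≥ √2 · min{‖T(w)‖_∞ : w ∈ S¹}. -/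
/-!
Let `ℓ₀, ℓ₁` be the coordinate functionals of `T` and `R = max ‖ℓ₀‖ ‖ℓ₁‖`; by Riesz
representation `s` attains the value `R` on the unit circle. The preimages `w₁, w₂` of the corners
`(1, 1)` and `(1, -1)` of the unit square satisfy `ℓ₀ (w₁ + w₂) = ℓ₁ (w₁ - w₂) = 2`, so
`R ‖w₁ ± w₂‖ ≥ 2`, and the parallelogram law turns this into `R M ≥ √2` for
`M = max ‖w₁‖ ‖w₂‖`. Rescaling the longer `wᵢ` to the unit circle gives a point where `s = 1 / M`.
-/

open InnerProductSpace

section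

variable {E : Type*} [NormedAddCommGroup E] [InnerProductSpace ℝ E]

theorem exists_norm_eq_one_apply_eq_opNorm [CompleteSpace E] (ℓ : StrongDual ℝ E) (hℓ : ℓ ≠ 0) :
    ∃ v : E, ‖v‖ = 1 ∧ ℓ v = ‖ℓ‖ := by
  obtain ⟨a, rfl⟩ := (toDual ℝ E).surjective ℓ
  have ha : a ≠ 0 := by rintro rfl; exact hℓ (map_zero _)
  refine ⟨‖a‖⁻¹ • a, norm_smul_inv_norm ha, ?_⟩
  rw [toDual_apply_apply, LinearIsometryEquiv.norm_map, inner_smul_right,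
    real_inner_self_eq_norm_sq]
  field_simp

theorem max_abs_apply_le (ℓ₀ ℓ₁ : StrongDual ℝ E) (v : E) :
    max |ℓ₀ v| |ℓ₁ v| ≤ max ‖ℓ₀‖ ‖ℓ₁‖ * ‖v‖ := by
  rw [max_mul_of_nonneg _ _ (norm_nonneg v)]
  exact max_le_max (ℓ₀.le_opNorm v) (ℓ₁.le_opNorm v)

theorem exists_norm_eq_one_max_opNorm_le [CompleteSpace E] (ℓ₀ ℓ₁ : StrongDual ℝ E)
    (hℓ₀ : ℓ₀ ≠ 0) (hℓ₁ : ℓ₁ ≠ 0) :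
    ∃ v : E, ‖v‖ = 1 ∧ max ‖ℓ₀‖ ‖ℓ₁‖ ≤ max |ℓ₀ v| |ℓ₁ v| := by
  rcases le_total ‖ℓ₀‖ ‖ℓ₁‖ with h | h
  · obtain ⟨v, hv, hℓv⟩ := exists_norm_eq_one_apply_eq_opNorm ℓ₁ hℓ₁
    exact ⟨v, hv, by rw [max_eq_right h, ← hℓv]; exact (le_abs_self _).trans (le_max_right _ _)⟩
  · obtain ⟨v, hv, hℓv⟩ := exists_norm_eq_one_apply_eq_opNorm ℓ₀ hℓ₀
    exact ⟨v, hv, by rw [max_eq_left h, ← hℓv]; exact (le_abs_self _).trans (le_max_left _ _)⟩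

theorem sqrt_two_le_max_opNorm_mul_max_norm (ℓ₀ ℓ₁ : StrongDual ℝ E) {w₁ w₂ : E}
    (h₀₁ : ℓ₀ w₁ = 1) (h₁₁ : ℓ₁ w₁ = 1) (h₀₂ : ℓ₀ w₂ = 1) (h₁₂ : ℓ₁ w₂ = -1) :
    √2 ≤ max ‖ℓ₀‖ ‖ℓ₁‖ * max ‖w₁‖ ‖w₂‖ := by
  set R := max ‖ℓ₀‖ ‖ℓ₁‖
  set M := max ‖w₁‖ ‖w₂‖
  have hadd : 2 ≤ R * ‖w₁ + w₂‖ := calc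
    2 = ℓ₀ (w₁ + w₂) := by rw [map_add, h₀₁, h₀₂]; norm_num
    _ ≤ ‖ℓ₀‖ * ‖w₁ + w₂‖ := (le_abs_self _).trans (ℓ₀.le_opNorm _)
    _ ≤ R * ‖w₁ + w₂‖ := by gcongr; exact le_max_left _ _
  have hsub : 2 ≤ R * ‖w₁ - w₂‖ := calc
    2 = ℓ₁ (w₁ - w₂) := by rw [map_sub, h₁₁, h₁₂]; norm_num
    _ ≤ ‖ℓ₁‖ * ‖w₁ - w₂‖ := (le_abs_self _).trans (ℓ₁.le_opNorm _)
    _ ≤ R * ‖w₁ - w₂‖ := by gcongr; exact le_max_right _ _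
  have hpar : ‖w₁ + w₂‖ ^ 2 + ‖w₁ - w₂‖ ^ 2 ≤ 4 * M ^ 2 := by
    have h₁ : ‖w₁‖ ≤ M := le_max_left _ _
    have h₂ : ‖w₂‖ ≤ M := le_max_right _ _
    nlinarith [parallelogram_law_with_norm ℝ w₁ w₂, norm_nonneg w₁, norm_nonneg w₂]
  have hRM : 2 ≤ (R * M) ^ 2 := by
    have : 8 ≤ R ^ 2 * (4 * M ^ 2) := calc
      8 ≤ (R * ‖w₁ + w₂‖) ^ 2 + (R * ‖w₁ - w₂‖) ^ 2 := by nlinarith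
      _ = R ^ 2 * (‖w₁ + w₂‖ ^ 2 + ‖w₁ - w₂‖ ^ 2) := by ring
      _ ≤ R ^ 2 * (4 * M ^ 2) := by gcongr
    linarith
  exact Real.sqrt_le_iff.mpr ⟨by positivity, hRM⟩

theorem exists_norm_eq_one_sqrt_two_mul_max_abs_le [CompleteSpace E] (ℓ₀ ℓ₁ : StrongDual ℝ E)
    {w₁ w₂ : E} (h₀₁ : ℓ₀ w₁ = 1) (h₁₁ : ℓ₁ w₁ = 1) (h₀₂ : ℓ₀ w₂ = 1) (h₁₂ : ℓ₁ w₂ = -1) :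
    ∃ v w : E, ‖v‖ = 1 ∧ ‖w‖ = 1 ∧ 0 < max |ℓ₀ w| |ℓ₁ w| ∧
      √2 * max |ℓ₀ w| |ℓ₁ w| ≤ max |ℓ₀ v| |ℓ₁ v| := by
  have hℓ₀ : ℓ₀ ≠ 0 := by rintro rfl; simp at h₀₁
  have hℓ₁ : ℓ₁ ≠ 0 := by rintro rfl; simp at h₁₁
  obtain ⟨v, hv, hRv⟩ := exists_norm_eq_one_max_opNorm_le ℓ₀ ℓ₁ hℓ₀ hℓ₁
  obtain ⟨u, hu_one, hu_norm⟩ : ∃ u, max |ℓ₀ u| |ℓ₁ u| = 1 ∧ ‖u‖ = max ‖w₁‖ ‖w₂‖ := by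
    rcases max_choice ‖w₁‖ ‖w₂‖ with h | h
    · exact ⟨w₁, by simp [h₀₁, h₁₁], h.symm⟩
    · exact ⟨w₂, by simp [h₀₂, h₁₂], h.symm⟩
  have hu₀ : u ≠ 0 := by rintro rfl; simp at hu_one
  have hu : 0 < ‖u‖ := norm_pos_iff.mpr hu₀
  have hscale : max |ℓ₀ (‖u‖⁻¹ • u)| |ℓ₁ (‖u‖⁻¹ • u)| = ‖u‖⁻¹ := by
    simp only [map_smul, smul_eq_mul, abs_mul, abs_inv, abs_norm]
    rw [← mul_max_of_nonneg _ _ (by positivity), hu_one, mul_one]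
  refine ⟨v, ‖u‖⁻¹ • u, hv, norm_smul_inv_norm hu₀, by rw [hscale]; positivity, ?_⟩
  rw [hscale, ← div_eq_mul_inv, div_le_iff₀ hu, hu_norm]
  exact (sqrt_two_le_max_opNorm_mul_max_norm ℓ₀ ℓ₁ h₀₁ h₁₁ h₀₂ h₁₂).trans (by gcongr)

end

/-- Let `T : ℝ² → ℝ²` be a bijective linear map and `s(v) = ‖T v‖_∞` (sup-norm). Then
`s` is not `Q`-quasi-conformal for any `Q < √2`; equivalently,
`max{‖T v‖_∞ : v ∈ S¹} ≥ √2 · min{‖T w‖_∞ : w ∈ S¹}`. -/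
theorem sup_norm_pullback_not_better_than_sqrt_two
    (T : EuclideanSpace ℝ (Fin 2) ≃ₗ[ℝ] EuclideanSpace ℝ (Fin 2)) :
    (∀ Q : ℝ,
      (∀ v w : EuclideanSpace ℝ (Fin 2), ‖v‖ = 1 → ‖w‖ = 1 →
        max |T v 0| |T v 1| ≤ Q * max |T w 0| |T w 1|) →
      Real.sqrt 2 ≤ Q) ∧
    Real.sqrt 2 *
        sInf {x : ℝ | ∃ w : EuclideanSpace ℝ (Fin 2), ‖w‖ = 1 ∧ max |T w 0| |T w 1| = x} ≤
      sSup {x : ℝ | ∃ v : EuclideanSpace ℝ (Fin 2), ‖v‖ = 1 ∧ max |T v 0| |T v 1| = x} := by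
  let ℓ (i : Fin 2) : StrongDual ℝ (EuclideanSpace ℝ (Fin 2)) :=
    EuclideanSpace.proj i ∘L LinearMap.toContinuousLinearMap T.toLinearMap
  obtain ⟨v, w, hv, hw, hw_pos, hvw⟩ := exists_norm_eq_one_sqrt_two_mul_max_abs_le (ℓ 0) (ℓ 1)
    (w₁ := T.symm !₂[1, 1]) (w₂ := T.symm !₂[1, -1]) (by simp [ℓ]) (by simp [ℓ]) (by simp [ℓ])
    (by simp [ℓ])
  refine ⟨fun Q hQ => le_of_mul_le_mul_right (hvw.trans (hQ v w hv hw)) hw_pos, ?_⟩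
  calc √2 * sInf _ ≤ √2 * max |T w 0| |T w 1| := by
        gcongr
        exact csInf_le ⟨0, by rintro _ ⟨u, -, rfl⟩; positivity⟩ ⟨w, hw, rfl⟩
    _ ≤ max |T v 0| |T v 1| := hvw
    _ ≤ sSup _ := by
        refine le_csSup ⟨max ‖ℓ 0‖ ‖ℓ 1‖, ?_⟩ ⟨v, hv, rfl⟩
        rintro _ ⟨u, hu, rfl⟩
        exact (max_abs_apply_le (ℓ 0) (ℓ 1) u).trans_eq (by rw [hu, mul_one])
end

section
/- Let n ≥ 1, let Y be a finite-dimensional real normed vector space with norm ‖·‖, let B be the closed Euclidean unit ball in ℝⁿ, let L : ℝⁿ → Y be a linear map, and let ψ : B → Y be a smooth map (C¹ on a neighborhood of B) with ψ(z) = L(z) for every z ∈ ∂B. Then for every p ≥ 1 and every v in the unit sphere S^{n−1}: ω_n·‖L(v)‖^p ≤ ∫_B ‖d_zψ(v)‖^p dL^n(z), where d_zψ denotes the derivative of ψ at z and ω_n = L^n(B). -/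
/-!
Write `ψ = L + φ` with `φ` vanishing on the unit sphere. Slicing the ball by the chords parallel
to `v`, the fundamental theorem of calculus makes the integral of `dφ(v)` over each chord equal to
`φ(end) - φ(start) = 0`, so by Fubini the average of `dψ(v)` over the ball is `L v`. Jensen's
inequality for the convex function `‖·‖ ^ p` then gives `‖L v‖ ^ p ≤ ⨍_B ‖dψ(v)‖ ^ p`.
-/

open MeasureTheory Metric Set
open scoped RealInnerProductSpace ENNReal

section

variable {E Y : Type*} [NormedAddCommGroup Y] [NormedSpace ℝ Y]

theorem ContDiffOn.continuousOn_fderiv_apply [NormedAddCommGroup E] [NormedSpace ℝ E]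
    {φ : E → Y} {U : Set E} (hφ : ContDiffOn ℝ 1 φ U) (hU : IsOpen U) (v : E) :
    ContinuousOn (fun z => fderiv ℝ φ z v) U :=
  (hφ.continuousOn_fderiv_of_isOpen hU le_rfl).clm_apply continuousOn_const

theorem integral_fderiv_apply_line_eq_sub [CompleteSpace Y] [NormedAddCommGroup E]
    [NormedSpace ℝ E] {φ : E → Y} {U : Set E} (hU : IsOpen U) (hφ : ContDiffOn ℝ 1 φ U)
    {w e : E} {a b : ℝ} (hseg : ∀ t ∈ uIcc a b, w + t • e ∈ U) :
    ∫ t in a..b, fderiv ℝ φ (w + t • e) e = φ (w + b • e) - φ (w + a • e) := by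
  have hline : Continuous fun t : ℝ => w + t • e := by fun_prop
  refine intervalIntegral.integral_eq_sub_of_hasDerivAt (f := fun t => φ (w + t • e))
    (fun t ht => ?_) ((hφ.continuousOn_fderiv_apply hU e).comp hline.continuousOn hseg
      |>.intervalIntegrable)
  have hdiff := (hφ.contDiffAt (hU.mem_nhds (hseg t ht))).differentiableAt one_ne_zero
  have hcurve : HasDerivAt (fun t : ℝ => w + t • e) e t := by
    simpa using ((hasDerivAt_id t).smul_const e).const_add w
  exact hdiff.hasFDerivAt.comp_hasDerivAt t hcurve

variable [NormedAddCommGroup E] [InnerProductSpace ℝ E]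

theorem norm_add_smul_sq_of_inner_eq_zero {w e : E} (hw : ⟪w, e⟫ = 0) (he : ‖e‖ = 1) (t : ℝ) :
    ‖w + t • e‖ ^ 2 = ‖w‖ ^ 2 + t ^ 2 := by
  rw [sq, sq, norm_add_sq_eq_norm_sq_add_norm_sq_of_inner_eq_zero _ _
    (by rw [inner_smul_right, hw, mul_zero]), norm_smul, he, Real.norm_eq_abs]
  nlinarith [sq_abs t]

/-- For `‖w‖ > 1` both sides vanish, the square root being `0` there. -/
theorem integral_indicator_closedBall_add_smul {w e : E} (hw : ⟪w, e⟫ = 0) (he : ‖e‖ = 1)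
    (f : E → Y) :
    ∫ t : ℝ, (closedBall (0 : E) 1).indicator f (w + t • e) =
      ∫ t in -√(1 - ‖w‖ ^ 2)..√(1 - ‖w‖ ^ 2), f (w + t • e) := by
  set s := √(1 - ‖w‖ ^ 2)
  have hmem : ∀ t : ℝ, w + t • e ∈ closedBall 0 1 ↔ ‖w‖ ^ 2 + t ^ 2 ≤ 1 := fun t => by
    rw [mem_closedBall_zero_iff, ← sq_le_one_iff₀ (norm_nonneg _),
      norm_add_smul_sq_of_inner_eq_zero hw he]
  rcases le_or_gt ‖w‖ 1 with hw1 | hw1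
  · have hs : s ^ 2 = 1 - ‖w‖ ^ 2 := Real.sq_sqrt (by nlinarith [norm_nonneg w])
    have hslice : (fun t : ℝ => w + t • e) ⁻¹' closedBall 0 1 = Icc (-s) s := by
      ext t
      rw [mem_preimage, hmem, mem_Icc, ← abs_le,
        ← sq_le_sq₀ (abs_nonneg t) (Real.sqrt_nonneg _), sq_abs, hs]
      constructor <;> intro h <;> linarith
    simp_rw [← indicator_comp_right (fun t : ℝ => w + t • e), hslice]
    rw [integral_indicator measurableSet_Icc, integral_Icc_eq_integral_Ioc,
      intervalIntegral.integral_of_le (neg_le_self (Real.sqrt_nonneg _))]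
    rfl
  · have hout : ∀ t : ℝ, w + t • e ∉ closedBall 0 1 := fun t => by
      rw [hmem]; nlinarith [sq_nonneg t]
    rw [show s = 0 from Real.sqrt_eq_zero'.2 (by nlinarith), neg_zero,
      intervalIntegral.integral_same]
    simp [indicator_of_notMem (hout _)]

theorem integral_indicator_closedBall_fderiv_apply_eq_zero [CompleteSpace Y] {φ : E → Y}
    {U : Set E} (hU : IsOpen U) (hBU : closedBall 0 1 ⊆ U) (hφ : ContDiffOn ℝ 1 φ U)
    (h0 : ∀ z ∈ sphere (0 : E) 1, φ z = 0) {w e : E} (hw : ⟪w, e⟫ = 0) (he : ‖e‖ = 1) :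
    ∫ t : ℝ, (closedBall (0 : E) 1).indicator (fun z => fderiv ℝ φ z e) (w + t • e) = 0 := by
  rw [integral_indicator_closedBall_add_smul hw he]
  set s := √(1 - ‖w‖ ^ 2)
  rcases le_or_gt ‖w‖ 1 with hw1 | hw1
  · have hs : s ^ 2 = 1 - ‖w‖ ^ 2 := Real.sq_sqrt (by nlinarith [norm_nonneg w])
    have hsph : ∀ t, t ^ 2 = s ^ 2 → φ (w + t • e) = 0 := fun t ht => h0 _ <| by
      rw [mem_sphere_zero_iff_norm, ← pow_eq_one_iff_of_nonneg (norm_nonneg _) two_ne_zero,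
        norm_add_smul_sq_of_inner_eq_zero hw he, ht, hs]
      ring
    have hseg : ∀ t ∈ uIcc (-s) s, w + t • e ∈ U := fun t ht => hBU <| by
      rw [uIcc_of_le (neg_le_self (Real.sqrt_nonneg _))] at ht
      rw [mem_closedBall_zero_iff, ← sq_le_one_iff₀ (norm_nonneg _),
        norm_add_smul_sq_of_inner_eq_zero hw he]
      nlinarith [sq_le_sq' ht.1 ht.2]
    rw [integral_fderiv_apply_line_eq_sub hU hφ hseg, hsph s rfl, hsph (-s) (neg_sq s), sub_zero]
  · rw [show s = 0 from Real.sqrt_eq_zero'.2 (by nlinarith), neg_zero,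
      intervalIntegral.integral_same]

theorem exists_measurePreserving_line_coordinates [FiniteDimensional ℝ E] [MeasurableSpace E]
    [BorelSpace E] {v : E} (hv : ‖v‖ = 1) :
    ∃ (m : ℕ) (Θ : (ℝ × (Fin m → ℝ)) ≃ᵐ E), MeasurePreserving Θ ∧
      ∀ t y, Θ (t, y) = Θ (0, y) + t • v ∧ ⟪Θ (0, y), v⟫ = 0 := by
  obtain ⟨m, hm⟩ : ∃ m, Module.finrank ℝ E = m + 1 := Nat.exists_eq_add_one.2 <|
    Module.finrank_pos_iff_exists_ne_zero.2 ⟨v, norm_ne_zero_iff.1 (by simp [hv])⟩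
  obtain ⟨b, hb⟩ := Orthonormal.exists_orthonormalBasis_extension_of_card_eq (ι := Fin (m + 1))
    (by simpa using hm) (v := fun _ => v) (s := {0})
    (orthonormal_subsingleton_iff.2 fun _ => hv)
  have hb0 : b 0 = v := hb 0 rfl
  refine ⟨m, (MeasurableEquiv.piFinSuccAbove (fun _ => ℝ) 0).symm.trans
    ((MeasurableEquiv.toLp 2 _).trans b.repr.symm.toMeasurableEquiv), ?_, fun t y => ⟨?_, ?_⟩⟩
  · exact (volume_preserving_piFinSuccAbove (fun _ => ℝ) 0).symm.trans
      ((EuclideanSpace.volume_preserving_symm_measurableEquiv_toLp _).symm.trans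
        b.repr.symm.measurePreserving)
  · simp only [MeasurableEquiv.trans_apply, MeasurableEquiv.piFinSuccAbove_symm_apply,
      LinearIsometryEquiv.coe_toMeasurableEquiv]
    rw [← hb0, ← b.repr_symm_single, ← map_smul, ← map_add]
    congr 1
    ext i
    refine Fin.cases ?_ (fun k => ?_) i <;> simp
  · simp only [MeasurableEquiv.trans_apply, MeasurableEquiv.piFinSuccAbove_symm_apply,
      LinearIsometryEquiv.coe_toMeasurableEquiv]
    rw [← hb0, real_inner_comm, ← b.repr_apply_apply]
    simp

variable [FiniteDimensional ℝ E] [MeasurableSpace E] [BorelSpace E] [CompleteSpace Y]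

theorem setIntegral_closedBall_fderiv_apply_eq_zero_of_norm_eq_one {φ : E → Y} {U : Set E}
    (hU : IsOpen U) (hBU : closedBall 0 1 ⊆ U) (hφ : ContDiffOn ℝ 1 φ U)
    (h0 : ∀ z ∈ sphere (0 : E) 1, φ z = 0) {v : E} (hv : ‖v‖ = 1) :
    ∫ z in closedBall (0 : E) 1, fderiv ℝ φ z v = 0 := by
  obtain ⟨m, Θ, hΘ, hline⟩ := exists_measurePreserving_line_coordinates hv
  set g := (closedBall (0 : E) 1).indicator fun z => fderiv ℝ φ z v
  have hg : Integrable g := (integrable_indicator_iff measurableSet_closedBall).2 <|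
    ((hφ.continuousOn_fderiv_apply hU v).mono hBU).integrableOn_compact (isCompact_closedBall 0 1)
  have hgΘ : Integrable (g ∘ Θ) (volume.prod volume) := by
    rw [← Measure.volume_eq_prod]
    exact (hΘ.integrable_comp_emb Θ.measurableEmbedding).2 hg
  calc ∫ z in closedBall (0 : E) 1, fderiv ℝ φ z v = ∫ z, g z :=
        (integral_indicator measurableSet_closedBall).symm
    _ = ∫ q, g (Θ q) ∂(volume.prod volume) := by
        rw [← Measure.volume_eq_prod]; exact (hΘ.integral_comp' g).symm
    _ = ∫ y, ∫ t, g (Θ (t, y)) := integral_prod_symm _ hgΘ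
    _ = ∫ y, ∫ t, g (Θ (0, y) + t • v) := by
        congr 1; ext y; congr 1; ext t; rw [(hline t y).1]
    _ = 0 := by
        simp_rw [g, integral_indicator_closedBall_fderiv_apply_eq_zero hU hBU hφ h0
          (hline 0 _).2 hv, integral_zero]

theorem setIntegral_closedBall_fderiv_apply_eq_zero {φ : E → Y} {U : Set E}
    (hU : IsOpen U) (hBU : closedBall 0 1 ⊆ U) (hφ : ContDiffOn ℝ 1 φ U)
    (h0 : ∀ z ∈ sphere (0 : E) 1, φ z = 0) (v : E) :
    ∫ z in closedBall (0 : E) 1, fderiv ℝ φ z v = 0 := by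
  rcases eq_or_ne v 0 with rfl | hv
  · simp
  have hu : ‖(‖v‖⁻¹ : ℝ) • v‖ = 1 := norm_smul_inv_norm hv
  calc ∫ z in closedBall (0 : E) 1, fderiv ℝ φ z v
      = ∫ z in closedBall (0 : E) 1, ‖v‖ • fderiv ℝ φ z (‖v‖⁻¹ • v) := by
        simp_rw [map_smul, smul_inv_smul₀ (norm_ne_zero_iff.2 hv)]
    _ = 0 := by
        rw [integral_smul,
          setIntegral_closedBall_fderiv_apply_eq_zero_of_norm_eq_one hU hBU hφ h0 hu, smul_zero]

theorem setIntegral_closedBall_fderiv_apply_of_eqOn_sphere {ψ : E → Y} {U : Set E}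
    (hU : IsOpen U) (hBU : closedBall 0 1 ⊆ U) (hψ : ContDiffOn ℝ 1 ψ U) (L : E →ₗ[ℝ] Y)
    (hbd : ∀ z ∈ sphere (0 : E) 1, ψ z = L z) (v : E) :
    ∫ z in closedBall (0 : E) 1, fderiv ℝ ψ z v = volume.real (closedBall (0 : E) 1) • L v := by
  set Lc := LinearMap.toContinuousLinearMap L
  have hφ : ContDiffOn ℝ 1 (ψ - ⇑Lc) U := hψ.sub Lc.contDiff.contDiffOn
  have hderiv : ∀ z ∈ U, fderiv ℝ ψ z v = fderiv ℝ (ψ - ⇑Lc) z v + L v := fun z hz => by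
    have hψz := (hψ.contDiffAt (hU.mem_nhds hz)).differentiableAt one_ne_zero
    rw [fderiv_sub hψz Lc.differentiableAt, Lc.fderiv]
    simp [Lc]
  have hint : IntegrableOn (fun z => fderiv ℝ (ψ - ⇑Lc) z v) (closedBall 0 1) :=
    ((hφ.continuousOn_fderiv_apply hU v).mono hBU).integrableOn_compact (isCompact_closedBall 0 1)
  calc ∫ z in closedBall (0 : E) 1, fderiv ℝ ψ z v
      = ∫ z in closedBall (0 : E) 1, fderiv ℝ (ψ - ⇑Lc) z v + L v :=
        setIntegral_congr_fun measurableSet_closedBall fun z hz => hderiv z (hBU hz)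
    _ = volume.real (closedBall (0 : E) 1) • L v := by
        rw [integral_add hint (integrableOn_const (isCompact_closedBall 0 1).measure_lt_top.ne),
          setIntegral_closedBall_fderiv_apply_eq_zero hU hBU hφ
            (fun z hz => by simp [hbd z hz, Lc]), zero_add, setIntegral_const]

end

theorem norm_setAverage_rpow_le {α Y : Type*} [MeasurableSpace α] {μ : Measure α} {s : Set α}
    [NormedAddCommGroup Y] [NormedSpace ℝ Y] [CompleteSpace Y] {p : ℝ} (hp : 1 ≤ p)
    (h0 : μ s ≠ 0) (hs : μ s ≠ ∞) {f : α → Y} (hf : IntegrableOn f s μ)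
    (hfp : IntegrableOn (fun x => ‖f x‖ ^ p) s μ) :
    ‖⨍ x in s, f x ∂μ‖ ^ p ≤ ⨍ x in s, ‖f x‖ ^ p ∂μ := by
  have hconv : ConvexOn ℝ univ fun y : Y => ‖y‖ ^ p := by
    refine ⟨convex_univ, fun x _ y _ a b ha hb hab => ?_⟩
    calc ‖a • x + b • y‖ ^ p ≤ (a * ‖x‖ + b * ‖y‖) ^ p := by
          gcongr
          refine (norm_add_le _ _).trans_eq ?_
          rw [norm_smul, norm_smul, Real.norm_of_nonneg ha, Real.norm_of_nonneg hb]
      _ ≤ a • ‖x‖ ^ p + b • ‖y‖ ^ p :=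
          (convexOn_rpow hp).2 (norm_nonneg x) (norm_nonneg y) ha hb hab
  have hcont : Continuous fun y : Y => ‖y‖ ^ p :=
    continuous_norm.rpow_const fun _ => Or.inr (by linarith)
  exact hconv.map_set_average_le hcont.continuousOn isClosed_univ h0 hs (by simp) hf hfp

theorem directional_quasiconvexity_general (n : ℕ)
    {Y : Type*} [NormedAddCommGroup Y] [NormedSpace ℝ Y] [FiniteDimensional ℝ Y]
    (p : ℝ) (hp : 1 ≤ p)
    (L : EuclideanSpace ℝ (Fin n) →ₗ[ℝ] Y) (ψ : EuclideanSpace ℝ (Fin n) → Y)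
    (U : Set (EuclideanSpace ℝ (Fin n))) (hU : IsOpen U)
    (hBU : closedBall (0 : EuclideanSpace ℝ (Fin n)) 1 ⊆ U)
    (hψ : ContDiffOn ℝ 1 ψ U)
    (hbd : ∀ z ∈ sphere (0 : EuclideanSpace ℝ (Fin n)) 1, ψ z = L z)
    (v : EuclideanSpace ℝ (Fin n)) :
    (volume (closedBall (0 : EuclideanSpace ℝ (Fin n)) 1)).toReal * ‖L v‖ ^ p ≤
      ∫ z in closedBall (0 : EuclideanSpace ℝ (Fin n)) 1, ‖fderiv ℝ ψ z v‖ ^ p := by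
  set B := closedBall (0 : EuclideanSpace ℝ (Fin n)) 1
  have hB : IsCompact B := isCompact_closedBall 0 1
  have hB0 : volume B ≠ 0 := (measure_closedBall_pos volume 0 one_pos).ne'
  have hBfin : volume B ≠ ∞ := hB.measure_lt_top.ne
  have hcont : ContinuousOn (fun z => fderiv ℝ ψ z v) B :=
    (hψ.continuousOn_fderiv_apply hU v).mono hBU
  have hint : IntegrableOn (fun z => fderiv ℝ ψ z v) B := hcont.integrableOn_compact hB
  have hintp : IntegrableOn (fun z => ‖fderiv ℝ ψ z v‖ ^ p) B :=
    (hcont.norm.rpow_const fun _ _ => Or.inr (by linarith)).integrableOn_compact hB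
  have havg : ⨍ z in B, fderiv ℝ ψ z v = L v := by
    rw [setAverage_eq, setIntegral_closedBall_fderiv_apply_of_eqOn_sphere hU hBU hψ L hbd,
      smul_smul, inv_mul_cancel₀ (measureReal_ne_zero_iff hBfin |>.2 hB0), one_smul]
  calc (volume B).toReal * ‖L v‖ ^ p = volume.real B * ‖⨍ z in B, fderiv ℝ ψ z v‖ ^ p := by
        rw [havg, measureReal_def]
    _ ≤ volume.real B * ⨍ z in B, ‖fderiv ℝ ψ z v‖ ^ p := by
        gcongr; exact norm_setAverage_rpow_le hp hB0 hBfin hint hintp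
    _ = ∫ z in B, ‖fderiv ℝ ψ z v‖ ^ p := measure_smul_setAverage _ hBfin

/-- Let `Y` be a finite-dimensional normed space, `B` the closed Euclidean unit ball in
`ℝⁿ`, `L : ℝⁿ → Y` linear, and `ψ : B → Y` a `C¹` map on a neighborhood of `B` with
`ψ = L` on `∂B`. Then for every `p ≥ 1` and every unit vector `v`:
`ω_n·‖L v‖^p ≤ ∫_B ‖d_zψ(v)‖^p dLⁿ(z)`. -/
theorem directional_quasiconvexity (n : ℕ) (hn : 1 ≤ n)
    {Y : Type*} [NormedAddCommGroup Y] [NormedSpace ℝ Y] [FiniteDimensional ℝ Y]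
    (p : ℝ) (hp : 1 ≤ p)
    (L : EuclideanSpace ℝ (Fin n) →ₗ[ℝ] Y) (ψ : EuclideanSpace ℝ (Fin n) → Y)
    (U : Set (EuclideanSpace ℝ (Fin n))) (hU : IsOpen U)
    (hBU : closedBall (0 : EuclideanSpace ℝ (Fin n)) 1 ⊆ U)
    (hψ : ContDiffOn ℝ 1 ψ U)
    (hbd : ∀ z ∈ sphere (0 : EuclideanSpace ℝ (Fin n)) 1, ψ z = L z)
    (v : EuclideanSpace ℝ (Fin n)) (hv : ‖v‖ = 1) :
    (volume (closedBall (0 : EuclideanSpace ℝ (Fin n)) 1)).toReal * ‖L v‖ ^ p ≤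
      ∫ z in closedBall (0 : EuclideanSpace ℝ (Fin n)) 1, ‖fderiv ℝ ψ z v‖ ^ p :=
  directional_quasiconvexity_general n p hp L ψ U hU hBU hψ hbd v
end
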